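/- arXiv:1304.6986 — 4 statements merged into one kernel-verified Lean document; each statement's English description precedes it below -/
import Mathlib

section
/- Let (Ω,F,P) be a probability space, (E,B) a measurable space, X : Ω → E a measurable map, and f, g : E → ℝ measurable functions with E|f(X)| < ∞ and E|g(X)| < ∞. Let U, V ∈ F be events with V ⊆ U, and for each C ∈ B define the event D(C) = ({X ∈ C} ∩ U) ∪ ({X ∉ C} ∩ V) and the quantity ψ(C) = E[ f(X)·1_{D(C)} + g(X)·1_{D(C)^c} ]. Then the set C* = {x ∈ E : f(x) − g(x) ≥ 0} belongs to B and satisfies ψ(C*) = sup_{C ∈ B} ψ(C). -/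
open MeasureTheory

/-- The effective stopping event of a player using stopping set `C`, when the other
players' declarations produce the events `U = Π(D^1,…,Ω,…,D^p)` and
`V = Π(D^1,…,∅,…,D^p)`: `D(C) = ({X ∈ C} ∩ U) ∪ ({X ∉ C} ∩ V)`. -/
def stopEvent {Ω E : Type*} (X : Ω → E) (U V : Set Ω) (C : Set E) : Set Ω :=
  (X ⁻¹' C ∩ U) ∪ ((X ⁻¹' C)ᶜ ∩ V)

/-- The expected payoff `ψ(C) = E[f(X)·1_{D(C)} + g(X)·1_{D(C)ᶜ}]`. -/
noncomputable def stopPayoff {Ω E : Type*} [MeasurableSpace Ω] (P : Measure Ω)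
    (X : Ω → E) (f g : E → ℝ) (U V : Set Ω) (C : Set E) : ℝ :=
  ∫ ω, ((stopEvent X U V C).indicator (fun ω' => f (X ω')) ω +
        ((stopEvent X U V C)ᶜ).indicator (fun ω' => g (X ω')) ω) ∂P

/-! The payoff is maximised pointwise: on `V` every stopping set stops, off `U` none does, and on
`U \ V` the set `{f ≥ g}` stops exactly when stopping pays at least as much, so its realised
payoff there is `max (f X) (g X)`. -/

section

variable {Ω E : Type*} (X : Ω → E) (f g : E → ℝ) (U V : Set Ω)

noncomputable def stopReward (C : Set E) (ω : Ω) : ℝ :=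
  (stopEvent X U V C).indicator (fun ω' => f (X ω')) ω +
    ((stopEvent X U V C)ᶜ).indicator (fun ω' => g (X ω')) ω

theorem stopReward_eq_ite (C : Set E) (ω : Ω) [Decidable (ω ∈ stopEvent X U V C)] :
    stopReward X f g U V C ω = if ω ∈ stopEvent X U V C then f (X ω) else g (X ω) := by
  by_cases h : ω ∈ stopEvent X U V C <;> simp [stopReward, h]

theorem stopPayoff_eq_integral_stopReward [MeasurableSpace Ω] (P : Measure Ω) (C : Set E) :
    stopPayoff P X f g U V C = ∫ ω, stopReward X f g U V C ω ∂P :=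
  rfl

variable {X f g U V}

theorem stopReward_le_stopReward_nonneg_sub (hVU : V ⊆ U) (C : Set E) (ω : Ω) :
    stopReward X f g U V C ω ≤ stopReward X f g U V {x | 0 ≤ f x - g x} ω := by
  classical
  have hV := @hVU ω
  simp only [stopReward_eq_ite, stopEvent, Set.mem_union, Set.mem_inter_iff, Set.mem_compl_iff,
    Set.mem_preimage, Set.mem_ofPred_eq]
  by_cases hfg : 0 ≤ f (X ω) - g (X ω) <;> split_ifs <;> first | linarith | tauto

variable [MeasurableSpace Ω]

theorem integrable_stopReward {P : Measure Ω} (hfint : Integrable (fun ω => f (X ω)) P)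
    (hgint : Integrable (fun ω => g (X ω)) P) {C : Set E}
    (hD : MeasurableSet (stopEvent X U V C)) :
    Integrable (stopReward X f g U V C) P :=
  (hfint.indicator hD).add (hgint.indicator hD.compl)

variable [MeasurableSpace E]

theorem measurableSet_stopEvent (hX : Measurable X) (hU : MeasurableSet U)
    (hV : MeasurableSet V) {C : Set E} (hC : MeasurableSet C) :
    MeasurableSet (stopEvent X U V C) :=
  ((hX hC).inter hU).union ((hX hC).compl.inter hV)

end

theorem optimal_stopping_set_general {Ω E : Type*} [MeasurableSpace Ω] [MeasurableSpace E]
    (P : Measure Ω)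
    (X : Ω → E) (hX : Measurable X)
    (f g : E → ℝ) (hf : Measurable f) (hg : Measurable g)
    (hfint : Integrable (fun ω => f (X ω)) P) (hgint : Integrable (fun ω => g (X ω)) P)
    (U V : Set Ω) (hU : MeasurableSet U) (hV : MeasurableSet V) (hVU : V ⊆ U) :
    MeasurableSet {x : E | 0 ≤ f x - g x} ∧
      IsGreatest {r : ℝ | ∃ C : Set E, MeasurableSet C ∧ r = stopPayoff P X f g U V C}
        (stopPayoff P X f g U V {x : E | 0 ≤ f x - g x}) := by
  have hCopt : MeasurableSet {x : E | 0 ≤ f x - g x} :=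
    measurableSet_le measurable_const (hf.sub hg)
  refine ⟨hCopt, ⟨_, hCopt, rfl⟩, ?_⟩
  rintro _ ⟨C, hC, rfl⟩
  simp only [stopPayoff_eq_integral_stopReward]
  exact integral_mono
    (integrable_stopReward hfint hgint (measurableSet_stopEvent hX hU hV hC))
    (integrable_stopReward hfint hgint (measurableSet_stopEvent hX hU hV hCopt))
    (stopReward_le_stopReward_nonneg_sub hVU C)

/-- (Optimization lemma.) Let `X : Ω → E` be measurable, `f, g`
measurable with `f(X)`, `g(X)` integrable, and let `U, V` be events with `V ⊆ U`.
Then `C* = {x : f(x) - g(x) ≥ 0}` is measurable and maximizes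
`ψ(C) = E[f(X)·1_{D(C)} + g(X)·1_{D(C)ᶜ}]` over all measurable `C`. -/
theorem optimal_stopping_set {Ω E : Type*} [MeasurableSpace Ω] [MeasurableSpace E]
    (P : Measure Ω) [IsProbabilityMeasure P]
    (X : Ω → E) (hX : Measurable X)
    (f g : E → ℝ) (hf : Measurable f) (hg : Measurable g)
    (hfint : Integrable (fun ω => f (X ω)) P) (hgint : Integrable (fun ω => g (X ω)) P)
    (U V : Set Ω) (hU : MeasurableSet U) (hV : MeasurableSet V) (hVU : V ⊆ U) :
    MeasurableSet {x : E | 0 ≤ f x - g x} ∧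
      IsGreatest {r : ℝ | ∃ C : Set E, MeasurableSet C ∧ r = stopPayoff P X f g U V C}
        (stopPayoff P X f g U V {x : E | 0 ≤ f x - g x}) :=
  optimal_stopping_set_general P X hX f g hf hg hfint hgint U V hU hV hVU
end

section
/- In the finite-horizon multilateral stopping game of a Markov chain, define recursively v_{i,0} = f_i and, for n = 1,…,N, v_{i,n}(x) = ∫_E [ (f_i(y) − v_{i,n−1}(y))^+ · u_n^i(y) − (f_i(y) − v_{i,n−1}(y))^− · l_n^i(y) + v_{i,n−1}(y) ] K(x,dy), where C_{j,n} = {y ∈ E : f_j(y) − v_{j,n−1}(y) ≥ 0}, u_n^i(y) = π applied to the vector whose j-th coordinate is 1_{C_{j,n}}(y) for j ≠ i and whose i-th coordinate is 1, and l_n^i(y) is the same with i-th coordinate 0. Then the stopping strategy σ* in which player i declares σ*_n{}^i = 1 exactly when X_n ∈ C*_n{}^i = {x ∈ E : f_i(x) − v_{i,N−n}(x) ≥ 0} is an equilibrium with respect to π, and for every player i and every initial state x, E_x f_i(X_{t_π(σ*)}) = v_{i,N}(x). -/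
open MeasureTheory ProbabilityTheory

noncomputable section

/-- The natural filtration `F_n = σ(X_0,…,X_n)` of a process `X`. -/
def natFilt {Ω E : Type*} [MeasurableSpace E] (X : ℕ → Ω → E) (n : ℕ) :
    MeasurableSpace Ω :=
  ⨆ k ∈ Set.Iic n, MeasurableSpace.comap (X k) inferInstance

/-- An individual stopping strategy for the finite-horizon game: `σ_n^i` is
`F_n`-measurable for `1 ≤ n ≤ N`, and at the horizon the player must declare to stop. -/
def IsISS {Ω E : Type*} [MeasurableSpace E] (X : ℕ → Ω → E) (N : ℕ)
    (σi : ℕ → Ω → Bool) : Prop :=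
  (∀ n, 1 ≤ n → n ≤ N → Measurable[natFilt X n] (σi n)) ∧ ∀ ω, σi N ω = true

/-- The stopping time `t_π(σ) = inf {1 ≤ n ≤ N : π(σ_n^1,…,σ_n^p) = 1}` generated by a
stopping strategy `σ` and the aggregate function `π` in the `N`-horizon game. -/
def stopT {Ω : Type*} {p : ℕ} (π : (Fin p → Bool) → Bool) (N : ℕ)
    (σ : Fin p → ℕ → Ω → Bool) (ω : Ω) : ℕ :=
  sInf {n : ℕ | 1 ≤ n ∧ n ≤ N ∧ π (fun i => σ i n ω) = true}

/-- The value recursion of the finite-horizon multilateral stopping game: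
`v_{i,0} = f_i` and
`v_{i,n}(x) = ∫ [(f_i - v_{i,n-1})⁺ · u_n^i - (f_i - v_{i,n-1})⁻ · l_n^i + v_{i,n-1}] dK(x,·)`,
where `u_n^i(y)` (resp. `l_n^i(y)`) is `π` evaluated at the vector whose `j`-th
coordinate is `1_{C_{j,n}}(y)` for `j ≠ i`, with `1` (resp. `0`) in slot `i`, and
`C_{j,n} = {y : f_j(y) - v_{j,n-1}(y) ≥ 0}`. -/
def gameValue {E : Type*} [MeasurableSpace E] (K : Kernel E E) {p : ℕ}
    (f : Fin p → E → ℝ) (π : (Fin p → Bool) → Bool) : ℕ → Fin p → E → ℝ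
  | 0 => f
  | n + 1 => fun i x =>
      ∫ y,
        (max (f i y - gameValue K f π n i y) 0 *
            (if π (Function.update
                (fun j => decide (0 ≤ f j y - gameValue K f π n j y)) i true)
              then (1 : ℝ) else 0) -
          max (-(f i y - gameValue K f π n i y)) 0 *
            (if π (Function.update
                (fun j => decide (0 ≤ f j y - gameValue K f π n j y)) i false)
              then (1 : ℝ) else 0) +
          gameValue K f π n i y) ∂(K x)

/-!
Backward induction on the time left. Fix player `i` and a profile in which the other players
follow `σ*`, and let `Y_n = f_i(X_τ)` for the first time `τ ≥ n` at which `π` turns the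
declarations into a stop, so `Y_n = f_i(X_n)` on the stopping event at time `n` and
`Y_n = Y_{n+1}` off it. By induction, on `F_{n-1}`-sets `Y_n` integrates to at most
`v_{i,N-n+1}(X_{n-1})`: splitting at the stopping event bounds the integral of `Y_n` by that of
`if π(c, b) then f_i(X_n) else v_{i,N-n}(X_n)`, where `c` are the others' declarations and `b` is
player `i`'s own. As `π` is monotone, this is at most the integrand of the value recursion at
`X_n`, with equality for `b = [f_i ≥ v_{i,N-n}]`, i.e. under `σ*`, and the Markov property
integrates that integrand to `v_{i,N-n+1}(X_{n-1})`.
-/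

open scoped Classical

def HasMarkovProperty {E Ω : Type*} [MeasurableSpace E] [MeasurableSpace Ω] (K : Kernel E E)
    (P : E → Measure Ω) (X : ℕ → Ω → E) : Prop :=
  ∀ (x : E) (n : ℕ) (h : E → ℝ), Measurable h → (∃ M, ∀ y, |h y| ≤ M) →
    (P x)[fun ω => h (X (n + 1) ω) | natFilt X n] =ᵐ[P x] fun ω => ∫ y, h y ∂(K (X n ω))

lemma measurable_natFilt {E Ω : Type*} [MeasurableSpace E] (X : ℕ → Ω → E) {k n : ℕ}
    (hkn : k ≤ n) : Measurable[natFilt X n] (X k) :=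
  Measurable.of_comap_le <|
    le_iSup₂ (f := fun k (_ : k ∈ Set.Iic n) => MeasurableSpace.comap (X k) inferInstance) k hkn

def natFiltration {E Ω : Type*} [MeasurableSpace E] [MeasurableSpace Ω] {X : ℕ → Ω → E}
    (hX : ∀ n, Measurable (X n)) : Filtration ℕ ‹MeasurableSpace Ω› where
  seq := natFilt X
  mono' _ _ hmn := iSup₂_le fun _ hk => (measurable_natFilt X (hk.trans hmn)).comap_le
  le' _ := iSup₂_le fun k _ => (hX k).comap_le

lemma integral_comp_of_ae_eq_const {Ω E : Type*} [MeasurableSpace Ω] {μ : Measure Ω}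
    [IsProbabilityMeasure μ] {Y : Ω → E} {x : E} (hY : ∀ᵐ ω ∂μ, Y ω = x) (g : E → ℝ) :
    ∫ ω, g (Y ω) ∂μ = g x := by
  rw [integral_congr_ae (hY.mono fun ω hω => congrArg g hω), integral_const, probReal_univ,
    one_smul]

section Markov

variable {E Ω : Type*} [MeasurableSpace E] [MeasurableSpace Ω] {K : Kernel E E} [IsFiniteKernel K]
  {P : E → Measure Ω} {X : ℕ → Ω → E}

/-- The Markov property is only assumed for bounded test functions; applied to indicators it
identifies the law of `X_{n+1}` on an `F_n`-set, and through the law it extends to every `g`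
with `g(X_{n+1})` integrable. -/
lemma HasMarkovProperty.map_restrict_succ (hM : HasMarkovProperty K P X)
    (hX : ∀ n, Measurable (X n)) (x : E) [IsFiniteMeasure (P x)] {n : ℕ} {A : Set Ω}
    (hA : MeasurableSet[natFilt X n] A) :
    ((P x).restrict A).map (X (n + 1)) = K ∘ₘ ((P x).restrict A).map (X n) := by
  ext S hS
  have hm : natFilt X n ≤ ‹MeasurableSpace Ω› := (natFiltration hX).le n
  have hind : Measurable (S.indicator (1 : E → ℝ)) := measurable_one.indicator hS
  have hbdd : ∃ M, ∀ y, |S.indicator (1 : E → ℝ) y| ≤ M :=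
    ⟨1, fun y => by by_cases hy : y ∈ S <;> simp [hy]⟩
  have hint : Integrable (fun ω => S.indicator (1 : E → ℝ) (X (n + 1) ω)) (P x) :=
    (integrable_const (1 : ℝ)).indicator (hX (n + 1) hS) |>.congr
      (ae_of_all _ fun ω => by by_cases hω : X (n + 1) ω ∈ S <;> simp [hω])
  have key := (setIntegral_condExp hm hint hA).symm.trans
    (setIntegral_congr_ae (hm A hA) ((hM x n _ hind hbdd).mono fun ω hω _ => hω))
  rw [show (fun ω => S.indicator (1 : E → ℝ) (X (n + 1) ω)) = (X (n + 1) ⁻¹' S).indicator 1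
    from rfl, integral_indicator_one (hX (n + 1) hS)] at key
  simp only [integral_indicator_one hS] at key
  refine (ENNReal.toReal_eq_toReal_iff' (measure_ne_top _ _) (measure_ne_top _ _)).mp ?_
  rw [Measure.map_apply (hX _) hS, Measure.bind_apply hS K.aemeasurable,
    lintegral_map (K.measurable_coe hS) (hX n), ← integral_toReal]
  · exact key
  · exact ((K.measurable_coe hS).comp (hX n)).aemeasurable
  · exact ae_of_all _ fun ω => measure_lt_top _ _

lemma HasMarkovProperty.integrable_integral_succ (hM : HasMarkovProperty K P X)
    (hX : ∀ n, Measurable (X n)) (x : E) [IsFiniteMeasure (P x)] {n : ℕ} {g : E → ℝ}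
    (hg : Measurable g) (hgi : Integrable (fun ω => g (X (n + 1) ω)) (P x)) :
    Integrable (fun ω => ∫ y, g y ∂(K (X n ω))) (P x) := by
  have hmap := hM.map_restrict_succ hX x (n := n) MeasurableSet.univ
  rw [Measure.restrict_univ] at hmap
  have hgK := (integrable_map_measure hg.aestronglyMeasurable (hX _).aemeasurable).mpr hgi
  rw [hmap, Measure.comp_eq_comp_const_apply] at hgK
  have hKg := hgK.integral_comp
  rw [Kernel.const_apply] at hKg
  exact (integrable_map_measure hg.stronglyMeasurable.integral_kernel.aestronglyMeasurable
    (hX n).aemeasurable).mp hKg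

lemma HasMarkovProperty.setIntegral_succ (hM : HasMarkovProperty K P X)
    (hX : ∀ n, Measurable (X n)) (x : E) [IsFiniteMeasure (P x)] {n : ℕ} {g : E → ℝ}
    (hg : Measurable g) (hgi : Integrable (fun ω => g (X (n + 1) ω)) (P x))
    {A : Set Ω} (hA : MeasurableSet[natFilt X n] A) :
    ∫ ω in A, g (X (n + 1) ω) ∂(P x) = ∫ ω in A, ∫ y, g y ∂(K (X n ω)) ∂(P x) := by
  have hgA : Integrable g (K ∘ₘ ((P x).restrict A).map (X n)) := by
    rw [← hM.map_restrict_succ hX x hA,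
      integrable_map_measure hg.aestronglyMeasurable (hX _).aemeasurable]
    exact hgi.restrict
  rw [← integral_map (hX _).aemeasurable hg.aestronglyMeasurable, hM.map_restrict_succ hX x hA,
    ← integral_map (hX n).aemeasurable hg.stronglyMeasurable.integral_kernel.aestronglyMeasurable,
    Measure.comp_eq_comp_const_apply, Kernel.integral_comp]
  · rw [Kernel.const_apply]
  · rwa [← Measure.comp_eq_comp_const_apply]

end Markov

section BackwardInduction

variable {Ω : Type*} {m : MeasurableSpace Ω} {ℱ : Filtration ℕ m} {μ : Measure Ω} {N : ℕ}
  {Y G V : ℕ → Ω → ℝ} {B : ℕ → Set Ω}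

/-! `B n` is the event of stopping at time `n`, `G n` the payoff of stopping then, and `Y n` the
payoff of stopping at the first `k ≥ n` with `ω ∈ B k`. -/

lemma integrable_of_backward_recursion (hB : ∀ n < N, MeasurableSet[ℱ (n + 1)] (B (n + 1)))
    (hG : ∀ n, Integrable (G n) μ) (hYN : Y N = G N)
    (hY : ∀ n, n + 1 < N → Y (n + 1) = (B (n + 1)).piecewise (G (n + 1)) (Y (n + 2))) :
    ∀ n < N, Integrable (Y (n + 1)) μ := by
  intro n hn
  obtain ⟨k, hk⟩ : ∃ k, n + k + 1 = N := ⟨N - n - 1, by omega⟩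
  induction k generalizing n with
  | zero => rw [add_zero] at hk; rw [hk, hYN]; exact hG N
  | succ k ih =>
    rw [hY n (by omega)]
    exact Integrable.piecewise (ℱ.le _ _ (hB n hn)) (hG _).integrableOn
      (ih (n + 1) (by omega) (by omega)).integrableOn

lemma setIntegral_le_of_backward_recursion (hB : ∀ n < N, MeasurableSet[ℱ (n + 1)] (B (n + 1)))
    (hG : ∀ n, Integrable (G n) μ) (hV : ∀ n, Integrable (V n) μ) (hYN : Y N = G N)
    (hBN : B N = Set.univ)
    (hY : ∀ n, n + 1 < N → Y (n + 1) = (B (n + 1)).piecewise (G (n + 1)) (Y (n + 2)))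
    (hstep : ∀ n < N, ∀ A, MeasurableSet[ℱ n] A →
      ∫ ω in A, (B (n + 1)).piecewise (G (n + 1)) (V (n + 1)) ω ∂μ ≤ ∫ ω in A, V n ω ∂μ) :
    ∀ n < N, ∀ A, MeasurableSet[ℱ n] A → ∫ ω in A, Y (n + 1) ω ∂μ ≤ ∫ ω in A, V n ω ∂μ := by
  intro n hn
  obtain ⟨k, hk⟩ : ∃ k, n + k + 1 = N := ⟨N - n - 1, by omega⟩
  induction k generalizing n with
  | zero =>
    intro A hA
    rw [add_zero] at hk
    have h := hstep n hn A hA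
    rwa [hk, hBN, Set.piecewise_univ, ← hYN, ← hk] at h
  | succ k ih =>
    intro A hA
    have hBm : MeasurableSet (B (n + 1)) := ℱ.le _ _ (hB n hn)
    have hcont : ∫ ω in (B (n + 1))ᶜ, Y (n + 2) ω ∂(μ.restrict A)
        ≤ ∫ ω in (B (n + 1))ᶜ, V (n + 1) ω ∂(μ.restrict A) := by
      rw [Measure.restrict_restrict hBm.compl]
      exact ih (n + 1) (by omega) (by omega) _ ((hB n hn).compl.inter (ℱ.mono n.le_succ _ hA))
    have hYint := integrable_of_backward_recursion hB hG hYN hY (n + 1) (by omega)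
    calc ∫ ω in A, Y (n + 1) ω ∂μ
        = ∫ ω in B (n + 1), G (n + 1) ω ∂(μ.restrict A)
          + ∫ ω in (B (n + 1))ᶜ, Y (n + 2) ω ∂(μ.restrict A) := by
          rw [hY n (by omega), integral_piecewise hBm (hG _).restrict.integrableOn
            hYint.restrict.integrableOn]
      _ ≤ ∫ ω in B (n + 1), G (n + 1) ω ∂(μ.restrict A)
          + ∫ ω in (B (n + 1))ᶜ, V (n + 1) ω ∂(μ.restrict A) := add_le_add_right hcont _
      _ = ∫ ω in A, (B (n + 1)).piecewise (G (n + 1)) (V (n + 1)) ω ∂μ :=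
          (integral_piecewise hBm (hG _).restrict.integrableOn (hV _).restrict.integrableOn).symm
      _ ≤ ∫ ω in A, V n ω ∂μ := hstep n hn A hA

end BackwardInduction

section StoppingRule

variable {E Ω : Type*} [MeasurableSpace E] {X : ℕ → Ω → E} {p : ℕ}
  {π : (Fin p → Bool) → Bool} {N : ℕ} {s : Fin p → ℕ → Ω → Bool}

variable (π s) in
def stopSet (n : ℕ) : Set Ω := {ω | π (fun j => s j n ω) = true}

variable (π N s) in
def firstStop (n : ℕ) (ω : Ω) : ℕ :=
  sInf {k : ℕ | n ≤ k ∧ k ≤ N ∧ π (fun j => s j k ω) = true}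

lemma stopT_eq_firstStop_one : stopT π N s = firstStop π N s 1 := rfl

lemma firstStop_of_mem {n : ℕ} {ω : Ω} (hnN : n ≤ N) (hω : ω ∈ stopSet π s n) :
    firstStop π N s n ω = n :=
  le_antisymm (Nat.sInf_le ⟨le_rfl, hnN, hω⟩) (le_csInf ⟨n, le_rfl, hnN, hω⟩ fun _ hk => hk.1)

lemma firstStop_of_notMem {n : ℕ} {ω : Ω} (hω : ω ∉ stopSet π s n) :
    firstStop π N s n ω = firstStop π N s (n + 1) ω := by
  refine congrArg sInf (Set.ext fun k => ⟨fun ⟨hnk, hk⟩ => ⟨?_, hk⟩, fun ⟨_, hk⟩ => ⟨by omega, hk⟩⟩)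
  rcases hnk.eq_or_lt with rfl | hlt
  · exact absurd hk.2 hω
  · exact hlt

lemma comp_firstStop_eq_piecewise (G : ℕ → Ω → ℝ) {n : ℕ} (hnN : n ≤ N) :
    (fun ω => G (firstStop π N s n ω) ω) =
      (stopSet π s n).piecewise (G n) (fun ω => G (firstStop π N s (n + 1) ω) ω) := by
  ext ω
  by_cases hω : ω ∈ stopSet π s n
  · rw [Set.piecewise_eq_of_mem _ _ _ hω, firstStop_of_mem hnN hω]
  · rw [Set.piecewise_eq_of_notMem _ _ _ hω, firstStop_of_notMem hω]

lemma piecewise_stopSet_apply (n : ℕ) (G V : Ω → ℝ) (ω : Ω) :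
    (stopSet π s n).piecewise G V ω = if π (fun j => s j n ω) then G ω else V ω := by
  by_cases h : π (fun j => s j n ω) = true <;> simp [Set.piecewise, stopSet, h]

lemma IsISS.update (hs : ∀ j, IsISS X N (s j)) {τ : ℕ → Ω → Bool} (hτ : IsISS X N τ)
    (i j : Fin p) : IsISS X N (Function.update s i τ j) := by
  rcases eq_or_ne j i with rfl | hji
  · rwa [Function.update_self]
  · rw [Function.update_of_ne hji]
    exact hs j

lemma measurableSet_stopSet (hs : ∀ j, IsISS X N (s j)) {n : ℕ} (h1n : 1 ≤ n) (hnN : n ≤ N) :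
    MeasurableSet[natFilt X n] (stopSet π s n) := by
  have hsn : Measurable[natFilt X n] fun ω j => s j n ω :=
    @measurable_pi_lambda _ _ _ (natFilt X n) _ _ fun j => (hs j).1 n h1n hnN
  exact ((measurable_of_countable π).comp hsn) (measurableSet_singleton true)

lemma stopSet_horizon (hπone : π (fun _ => true) = true) (hs : ∀ j, IsISS X N (s j)) :
    stopSet π s N = Set.univ :=
  Set.eq_univ_of_forall fun ω => show π _ = true by simpa only [(hs _).2 ω] using hπone

variable [MeasurableSpace Ω] {μ : Measure Ω} {G V : ℕ → Ω → ℝ}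

lemma integral_stopped_le_of_step (hX : ∀ n, Measurable (X n)) (hN : 1 ≤ N)
    (hπone : π (fun _ => true) = true) (hs : ∀ j, IsISS X N (s j))
    (hG : ∀ n, Integrable (G n) μ) (hV : ∀ n, Integrable (V n) μ)
    (hstep : ∀ n < N, ∀ A, MeasurableSet[natFilt X n] A →
      ∫ ω in A, (stopSet π s (n + 1)).piecewise (G (n + 1)) (V (n + 1)) ω ∂μ ≤
        ∫ ω in A, V n ω ∂μ) :
    ∫ ω, G (stopT π N s ω) ω ∂μ ≤ ∫ ω, V 0 ω ∂μ := by
  have hBN := stopSet_horizon hπone hs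
  have h := setIntegral_le_of_backward_recursion (ℱ := natFiltration hX)
    (Y := fun n ω => G (firstStop π N s n ω) ω)
    (fun n hn => measurableSet_stopSet hs (by omega) hn) hG hV
    (funext fun ω => by rw [firstStop_of_mem le_rfl (hBN ▸ Set.mem_univ ω)]) hBN
    (fun n hn => comp_firstStop_eq_piecewise G hn.le) hstep 0 hN Set.univ MeasurableSet.univ
  simpa only [Measure.restrict_univ, zero_add, stopT_eq_firstStop_one] using h

lemma integral_stopped_eq_of_step (hX : ∀ n, Measurable (X n)) (hN : 1 ≤ N)
    (hπone : π (fun _ => true) = true) (hs : ∀ j, IsISS X N (s j))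
    (hG : ∀ n, Integrable (G n) μ) (hV : ∀ n, Integrable (V n) μ)
    (hstep : ∀ n < N, ∀ A, MeasurableSet[natFilt X n] A →
      ∫ ω in A, (stopSet π s (n + 1)).piecewise (G (n + 1)) (V (n + 1)) ω ∂μ =
        ∫ ω in A, V n ω ∂μ) :
    ∫ ω, G (stopT π N s ω) ω ∂μ = ∫ ω, V 0 ω ∂μ := by
  refine le_antisymm
    (integral_stopped_le_of_step hX hN hπone hs hG hV fun n hn A hA => (hstep n hn A hA).le) ?_
  -- the reverse inequality is the same backward induction for `-G` and `-V`
  have h := integral_stopped_le_of_step (G := -G) (V := -V) hX hN hπone hs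
    (fun n => (hG n).neg) (fun n => (hV n).neg) fun n hn A hA => by
      simp only [Pi.neg_apply, Set.piecewise_neg, integral_neg, hstep n hn A hA, le_refl]
  simpa only [Pi.neg_apply, integral_neg, neg_le_neg_iff] using h

end StoppingRule

/-- `g b` is the aggregate decision when the player declares `b` and the others' declarations
are fixed; the value recursion integrates `stepValue (f_i y) (v_{i,n} y) g`. -/
def stepValue (F V : ℝ) (g : Bool → Bool) : ℝ :=
  max (F - V) 0 * (if g true then 1 else 0) - max (-(F - V)) 0 * (if g false then 1 else 0) + V

lemma stepValue_eq_ite (F V : ℝ) (g : Bool → Bool) :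
    stepValue F V g = if g (decide (0 ≤ F - V)) then F else V := by
  unfold stepValue
  by_cases h : 0 ≤ F - V
  · rw [max_eq_left h, max_eq_right (by linarith), decide_eq_true h]
    split_ifs <;> ring
  · rw [max_eq_right (by linarith), max_eq_left (by linarith), decide_eq_false h]
    split_ifs <;> ring

lemma ite_le_stepValue {g : Bool → Bool} (hg : Monotone g) (F V : ℝ) (b : Bool) :
    (if g b then F else V) ≤ stepValue F V g := by
  rw [stepValue_eq_ite]
  by_cases h : 0 ≤ F - V
  · have hb : g b = true → g true = true := Bool.le_iff_imp.mp (hg (Bool.le_true b))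
    rw [decide_eq_true h]
    split_ifs <;> first | linarith | exact absurd (hb ‹_›) ‹_›
  · have hb : g false = true → g b = true := Bool.le_iff_imp.mp (hg (Bool.false_le b))
    rw [decide_eq_false h]
    split_ifs <;> first | linarith | exact absurd (hb ‹_›) ‹_›

lemma abs_stepValue_le (F V : ℝ) (g : Bool → Bool) : |stepValue F V g| ≤ |F| + |V| := by
  rw [stepValue_eq_ite]
  split_ifs <;> linarith [abs_nonneg F, abs_nonneg V]

lemma Measurable.stepValue {E : Type*} [MeasurableSpace E] {F V : E → ℝ} {g : E → Bool → Bool}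
    (hF : Measurable F) (hV : Measurable V) (ht : Measurable fun y => g y true)
    (hf : Measurable fun y => g y false) :
    Measurable fun y => stepValue (F y) (V y) (g y) := by
  have hind : Measurable fun b : Bool => if b then (1 : ℝ) else 0 := measurable_of_countable _
  exact ((((hF.sub hV).max measurable_const).mul (hind.comp ht)).sub
    (((hF.sub hV).neg.max measurable_const).mul (hind.comp hf))).add hV

section GameValue

variable {E : Type*} [MeasurableSpace E] {p : ℕ} {K : Kernel E E} {f : Fin p → E → ℝ}
  {π : (Fin p → Bool) → Bool}

-- `stopRegion K f π n y j` is `1_{C_{j,n+1}}(y)`, so `C*_n{}^i` is `C_{i,N-n+1}`.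
variable (K f π) in
def stopRegion (n : ℕ) (y : E) : Fin p → Bool :=
  fun j => decide (0 ≤ f j y - gameValue K f π n j y)

variable (K f π) in
def valueIntegrand (n : ℕ) (i : Fin p) (y : E) : ℝ :=
  stepValue (f i y) (gameValue K f π n i y) fun b => π (Function.update (stopRegion K f π n y) i b)

lemma gameValue_succ (n : ℕ) (i : Fin p) (x : E) :
    gameValue K f π (n + 1) i x = ∫ y, valueIntegrand K f π n i y ∂(K x) := rfl

lemma measurable_stopRegion (hf : ∀ i, Measurable (f i)) {n : ℕ}
    (hv : ∀ j, Measurable (gameValue K f π n j)) : Measurable (stopRegion K f π n) :=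
  measurable_pi_lambda _ fun j => measurable_to_bool <| by
    convert measurableSet_le (measurable_const (a := (0 : ℝ))) ((hf j).sub (hv j)) using 1
    ext y
    simp [stopRegion]

lemma measurable_valueIntegrand (hf : ∀ i, Measurable (f i)) {n : ℕ}
    (hv : ∀ j, Measurable (gameValue K f π n j)) (i : Fin p) :
    Measurable (valueIntegrand K f π n i) := by
  have hg : ∀ b, Measurable fun y => π (Function.update (stopRegion K f π n y) i b) := fun b =>
    (measurable_of_countable fun c => π (Function.update c i b)).comp
      (measurable_stopRegion hf hv)
  exact (hf i).stepValue (hv i) (hg true) (hg false)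

lemma measurable_gameValue (hf : ∀ i, Measurable (f i)) (n : ℕ) (i : Fin p) :
    Measurable (gameValue K f π n i) := by
  induction n generalizing i with
  | zero => exact hf i
  | succ n ih =>
    exact (measurable_valueIntegrand hf ih i).stronglyMeasurable.integral_kernel.measurable

variable {Ω : Type*} [MeasurableSpace Ω] {P : E → Measure Ω} {X : ℕ → Ω → E}

lemma integrable_valueIntegrand_comp {μ : Measure Ω} (hX : ∀ n, Measurable (X n))
    (hf : ∀ i, Measurable (f i)) {k n : ℕ} {i : Fin p}
    (hfi : Integrable (fun ω => f i (X n ω)) μ)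
    (hvi : Integrable (fun ω => gameValue K f π k i (X n ω)) μ) :
    Integrable (fun ω => valueIntegrand K f π k i (X n ω)) μ :=
  (hfi.norm.add hvi.norm).mono'
    ((measurable_valueIntegrand hf (measurable_gameValue hf k) i).comp (hX n)).aestronglyMeasurable
    (ae_of_all _ fun _ => abs_stepValue_le _ _ _)

variable [IsFiniteKernel K] [∀ x, IsFiniteMeasure (P x)]

lemma integrable_gameValue_comp (hM : HasMarkovProperty K P X) (hX : ∀ n, Measurable (X n))
    (hf : ∀ i, Measurable (f i))
    (hfint : ∀ i n x, Integrable (fun ω => f i (X n ω)) (P x)) (k : ℕ) (i : Fin p) (n : ℕ)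
    (x : E) : Integrable (fun ω => gameValue K f π k i (X n ω)) (P x) := by
  induction k generalizing i n with
  | zero => exact hfint i n x
  | succ k ih =>
    simp_rw [gameValue_succ]
    exact hM.integrable_integral_succ hX x
      (measurable_valueIntegrand hf (measurable_gameValue hf k) i)
      (integrable_valueIntegrand_comp hX hf (hfint i (n + 1) x) (ih i (n + 1)))

lemma setIntegral_valueIntegrand_comp (hM : HasMarkovProperty K P X)
    (hX : ∀ n, Measurable (X n)) (hf : ∀ i, Measurable (f i))
    (hfint : ∀ i n x, Integrable (fun ω => f i (X n ω)) (P x)) (k : ℕ) (i : Fin p) (x : E)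
    {n : ℕ} {A : Set Ω} (hA : MeasurableSet[natFilt X n] A) :
    ∫ ω in A, valueIntegrand K f π k i (X (n + 1) ω) ∂(P x) =
      ∫ ω in A, gameValue K f π (k + 1) i (X n ω) ∂(P x) := by
  simp_rw [gameValue_succ]
  exact hM.setIntegral_succ hX x (measurable_valueIntegrand hf (measurable_gameValue hf k) i)
    (integrable_valueIntegrand_comp hX hf (hfint i (n + 1) x)
      (integrable_gameValue_comp hM hX hf hfint k i (n + 1) x)) hA

end GameValue

section Equilibrium

variable {E Ω : Type*} [MeasurableSpace E] {p : ℕ} {K : Kernel E E} {f : Fin p → E → ℝ}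
  {π : (Fin p → Bool) → Bool} {X : ℕ → Ω → E} {N : ℕ}

variable (K f π X N) in
def equilibriumStrategy : Fin p → ℕ → Ω → Bool :=
  fun i n ω => stopRegion K f π (N - n) (X n ω) i

lemma isISS_equilibriumStrategy (hf : ∀ i, Measurable (f i)) (i : Fin p) :
    IsISS X N (equilibriumStrategy K f π X N i) := by
  refine ⟨fun n _ _ => ?_, fun ω => by simp [equilibriumStrategy, stopRegion, gameValue]⟩
  exact ((measurable_pi_apply i).comp (measurable_stopRegion hf (measurable_gameValue hf _))).comp
    (measurable_natFilt X le_rfl)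

lemma piecewise_stopSet_update_le (hπ : Monotone π) (i : Fin p) (τ : ℕ → Ω → Bool) (m : ℕ)
    (ω : Ω) :
    (stopSet π (Function.update (equilibriumStrategy K f π X N) i τ) m).piecewise
        (fun ω => f i (X m ω)) (fun ω => gameValue K f π (N - m) i (X m ω)) ω ≤
      valueIntegrand K f π (N - m) i (X m ω) := by
  have hprofile : (fun j => Function.update (equilibriumStrategy K f π X N) i τ j m ω) =
      Function.update (stopRegion K f π (N - m) (X m ω)) i (τ m ω) :=
    funext fun j => Function.apply_update (fun _ (t : ℕ → Ω → Bool) => t m ω) _ i τ j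
  rw [piecewise_stopSet_apply, hprofile]
  exact ite_le_stepValue (hπ.comp Function.update_mono) _ _ _

lemma piecewise_stopSet_eq (i : Fin p) (m : ℕ) (ω : Ω) :
    (stopSet π (equilibriumStrategy K f π X N) m).piecewise
        (fun ω => f i (X m ω)) (fun ω => gameValue K f π (N - m) i (X m ω)) ω =
      valueIntegrand K f π (N - m) i (X m ω) := by
  rw [piecewise_stopSet_apply, valueIntegrand, stepValue_eq_ite]
  exact congrArg (fun b => if π b then _ else _) (Function.update_eq_self i _).symm

variable [MeasurableSpace Ω] [IsFiniteKernel K] {P : E → Measure Ω}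
  [∀ x, IsProbabilityMeasure (P x)]

lemma setIntegral_piecewise_stopSet_update_le (hM : HasMarkovProperty K P X)
    (hX : ∀ n, Measurable (X n)) (hf : ∀ i, Measurable (f i))
    (hfint : ∀ i n x, Integrable (fun ω => f i (X n ω)) (P x)) (hπ : Monotone π)
    {τ : ℕ → Ω → Bool} (hτ : IsISS X N τ) (i : Fin p) (x : E) {n : ℕ} (hn : n < N)
    {A : Set Ω} (hA : MeasurableSet[natFilt X n] A) :
    ∫ ω in A, (stopSet π (Function.update (equilibriumStrategy K f π X N) i τ) (n + 1)).piecewise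
        (fun ω => f i (X (n + 1) ω)) (fun ω => gameValue K f π (N - (n + 1)) i (X (n + 1) ω)) ω
          ∂(P x) ≤
      ∫ ω in A, gameValue K f π (N - n) i (X n ω) ∂(P x) := by
  have hB : MeasurableSet[natFilt X (n + 1)]
      (stopSet π (Function.update (equilibriumStrategy K f π X N) i τ) (n + 1)) :=
    measurableSet_stopSet (IsISS.update (isISS_equilibriumStrategy hf) hτ i) (by omega) hn
  calc _ ≤ ∫ ω in A, valueIntegrand K f π (N - (n + 1)) i (X (n + 1) ω) ∂(P x) :=
        setIntegral_mono
          (Integrable.piecewise ((natFiltration hX).le _ _ hB) (hfint i _ x).integrableOn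
            (integrable_gameValue_comp hM hX hf hfint _ i _ x).integrableOn).integrableOn
          (integrable_valueIntegrand_comp hX hf (hfint i _ x)
            (integrable_gameValue_comp hM hX hf hfint _ i _ x)).integrableOn
          (piecewise_stopSet_update_le hπ i τ (n + 1))
    _ = ∫ ω in A, gameValue K f π (N - (n + 1) + 1) i (X n ω) ∂(P x) :=
        setIntegral_valueIntegrand_comp hM hX hf hfint _ i x hA
    _ = _ := by rw [show N - (n + 1) + 1 = N - n by omega]

lemma setIntegral_piecewise_stopSet_eq (hM : HasMarkovProperty K P X)
    (hX : ∀ n, Measurable (X n)) (hf : ∀ i, Measurable (f i))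
    (hfint : ∀ i n x, Integrable (fun ω => f i (X n ω)) (P x)) (i : Fin p) (x : E) {n : ℕ}
    (hn : n < N) {A : Set Ω} (hA : MeasurableSet[natFilt X n] A) :
    ∫ ω in A, (stopSet π (equilibriumStrategy K f π X N) (n + 1)).piecewise
        (fun ω => f i (X (n + 1) ω)) (fun ω => gameValue K f π (N - (n + 1)) i (X (n + 1) ω)) ω
          ∂(P x) =
      ∫ ω in A, gameValue K f π (N - n) i (X n ω) ∂(P x) := by
  calc _ = ∫ ω in A, valueIntegrand K f π (N - (n + 1)) i (X (n + 1) ω) ∂(P x) :=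
        integral_congr_ae (ae_of_all _ (piecewise_stopSet_eq i (n + 1)))
    _ = ∫ ω in A, gameValue K f π (N - (n + 1) + 1) i (X n ω) ∂(P x) :=
        setIntegral_valueIntegrand_comp hM hX hf hfint _ i x hA
    _ = _ := by rw [show N - (n + 1) + 1 = N - n by omega]

theorem integral_stopT_equilibriumStrategy (hM : HasMarkovProperty K P X)
    (hX : ∀ n, Measurable (X n)) (hN : 1 ≤ N) (hf : ∀ i, Measurable (f i))
    (hfint : ∀ i n x, Integrable (fun ω => f i (X n ω)) (P x))
    (hπone : π (fun _ => true) = true) (hX0 : ∀ x, ∀ᵐ ω ∂(P x), X 0 ω = x) (i : Fin p) (x : E) :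
    ∫ ω, f i (X (stopT π N (equilibriumStrategy K f π X N) ω) ω) ∂(P x) =
      gameValue K f π N i x :=
  (integral_stopped_eq_of_step hX hN hπone (isISS_equilibriumStrategy hf)
    (fun n => hfint i n x) (fun n => integrable_gameValue_comp hM hX hf hfint _ i n x)
    fun _ hn _ hA => setIntegral_piecewise_stopSet_eq hM hX hf hfint i x hn hA).trans
    (integral_comp_of_ae_eq_const (hX0 x) _)

theorem integral_stopT_update_le (hM : HasMarkovProperty K P X)
    (hX : ∀ n, Measurable (X n)) (hN : 1 ≤ N) (hf : ∀ i, Measurable (f i))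
    (hfint : ∀ i n x, Integrable (fun ω => f i (X n ω)) (P x)) (hπ : Monotone π)
    (hπone : π (fun _ => true) = true) (hX0 : ∀ x, ∀ᵐ ω ∂(P x), X 0 ω = x)
    {τ : ℕ → Ω → Bool} (hτ : IsISS X N τ) (i : Fin p) (x : E) :
    ∫ ω, f i (X (stopT π N (Function.update (equilibriumStrategy K f π X N) i τ) ω) ω) ∂(P x) ≤
      gameValue K f π N i x :=
  (integral_stopped_le_of_step hX hN hπone (IsISS.update (isISS_equilibriumStrategy hf) hτ i)
    (fun n => hfint i n x) (fun n => integrable_gameValue_comp hM hX hf hfint _ i n x)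
    fun _ hn _ hA =>
      setIntegral_piecewise_stopSet_update_le hM hX hf hfint hπ hτ i x hn hA).trans_eq
    (integral_comp_of_ae_eq_const (hX0 x) _)

end Equilibrium

/-- In the finite-horizon multilateral stopping game of a homogeneous
Markov chain with transition kernel `K`, monotone aggregate function `π` with
`π(1,…,1) = 1`, and integrable utilities `f_i`, the strategy `σ*` in which player `i`
declares to stop at time `n` exactly when `X_n ∈ C*_n{}^i = {x : f_i(x) - v_{i,N-n}(x) ≥ 0}`
is an equilibrium with respect to `π`, and its payoff is `E_x f_i(X_{t_π(σ*)}) = v_{i,N}(x)`. -/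
theorem finite_horizon_equilibrium {E Ω : Type*} [MeasurableSpace E] [MeasurableSpace Ω]
    (K : Kernel E E) [IsMarkovKernel K]
    (P : E → Measure Ω) [∀ x, IsProbabilityMeasure (P x)]
    (X : ℕ → Ω → E) (hX : ∀ n, Measurable (X n))
    (N : ℕ) (hN : 1 ≤ N) (p : ℕ)
    (f : Fin p → E → ℝ) (hf : ∀ i, Measurable (f i))
    (hfint : ∀ (i : Fin p) (n : ℕ) (x : E), Integrable (fun ω => f i (X n ω)) (P x))
    (π : (Fin p → Bool) → Bool)
    (hπmono : ∀ a b : Fin p → Bool, (∀ j, a j ≤ b j) → π a ≤ π b)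
    (hπone : π (fun _ => true) = true)
    (hX0 : ∀ x : E, ∀ᵐ ω ∂(P x), X 0 ω = x)
    (hMarkov : ∀ (x : E) (n : ℕ) (h : E → ℝ), Measurable h → (∃ M, ∀ y, |h y| ≤ M) →
      (P x)[fun ω => h (X (n + 1) ω) | natFilt X n] =ᵐ[P x]
        fun ω => ∫ y, h y ∂(K (X n ω))) :
    -- the equilibrium strategy: stop iff `f_i(X_n) - v_{i,N-n}(X_n) ≥ 0`
    (∀ i : Fin p, IsISS X N
        (fun n ω => decide (0 ≤ f i (X n ω) - gameValue K f π (N - n) i (X n ω)))) ∧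
    -- no player can improve by a unilateral deviation
    (∀ (i : Fin p) (τ : ℕ → Ω → Bool), IsISS X N τ → ∀ x : E,
      ∫ ω, f i (X (stopT π N (Function.update
          (fun i' n ω' => decide (0 ≤ f i' (X n ω') - gameValue K f π (N - n) i' (X n ω')))
          i τ) ω) ω) ∂(P x) ≤
        ∫ ω, f i (X (stopT π N
          (fun i' n ω' => decide (0 ≤ f i' (X n ω') - gameValue K f π (N - n) i' (X n ω')))
          ω) ω) ∂(P x)) ∧
    -- the equilibrium payoff is `v_{i,N}`
    (∀ (i : Fin p) (x : E),
      ∫ ω, f i (X (stopT π N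
          (fun i' n ω' => decide (0 ≤ f i' (X n ω') - gameValue K f π (N - n) i' (X n ω')))
          ω) ω) ∂(P x) = gameValue K f π N i x) := by
  have hvalue := integral_stopT_equilibriumStrategy hMarkov hX hN hf hfint hπone hX0
  refine ⟨isISS_equilibriumStrategy hf, fun i τ hτ x => ?_, hvalue⟩
  exact (integral_stopT_update_le hMarkov hX hN hf hfint hπmono hπone hX0 hτ i x).trans_eq
    (hvalue i x).symm

end
end

section
/- Let (Ω,F,P) be a probability space with filtration (F_n)_{n=1}^N and let (X_n), (Y_n), (W_n), n = 1,…,N, be integrable real-valued processes adapted to (F_n), with no ordering relation assumed among them. A randomized stopping strategy for player 1 is an adapted process p = (p_n)_{n=1}^N with values in [0,1] and p_N = 1; similarly q = (q_n)_{n=1}^N for player 2. Define the expected payoff R(p,q) = E[ Σ_{n=1}^N ( ∏_{k=1}^{n−1} (1−p_k)(1−q_k) ) · ( p_n(1−q_n) X_n + (1−p_n) q_n Y_n + p_n q_n W_n ) ]. Then there exist randomized stopping strategies p* and q* forming a saddle point: R(p,q*) ≤ R(p*,q*) ≤ R(p*,q) for all randomized stopping strategies p, q; in particular the zero-sum game has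 a value, sup_p inf_q R(p,q) = inf_q sup_p R(p,q). -/
open MeasureTheory

noncomputable section

/-- A randomized stopping strategy for the `N`-horizon game: an adapted `[0,1]`-valued
process `(p_n)_{n=1}^N` with `p_N = 1`; `p_n` is the conditional probability of
declaring to stop at time `n`. -/
def IsRandStrat {Ω : Type*} {m : MeasurableSpace Ω} (F : Filtration ℕ m) (N : ℕ)
    (p : ℕ → Ω → ℝ) : Prop :=
  (∀ n, 1 ≤ n → n ≤ N → Measurable[F n] (p n) ∧ ∀ ω, p n ω ∈ Set.Icc (0 : ℝ) 1) ∧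
    ∀ ω, p N ω = 1

/-- The expected payoff of the randomized extension of the stopping game:
`R(p,q) = E[Σ_{n=1}^N (Π_{k=1}^{n-1} (1-p_k)(1-q_k)) ·
(p_n(1-q_n) X_n + (1-p_n) q_n Y_n + p_n q_n W_n)]`. -/
def randPayoff {Ω : Type*} [MeasurableSpace Ω] (P : Measure Ω) (N : ℕ)
    (X Y W : ℕ → Ω → ℝ) (p q : ℕ → Ω → ℝ) : ℝ :=
  ∫ ω, ∑ n ∈ Finset.Icc 1 N,
      (∏ k ∈ Finset.Icc 1 (n - 1), (1 - p k ω) * (1 - q k ω)) *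
        (p n ω * (1 - q n ω) * X n ω + (1 - p n ω) * q n ω * Y n ω +
          p n ω * q n ω * W n ω) ∂P

/-!
Backward induction. At a time `n < N` the two players face a `2 × 2` zero-sum game whose
entry for "nobody stops" is the conditional expectation `E[V_{n+1} | F_n]` of the next value;
such a game has a saddle point in mixed strategies, given by an explicit formula in the four
entries, so the stage saddle points form adapted strategies `p*`, `q*`. Put `V_N = W_N` and let
`V_n` be the stage value. Against `q*`, whatever `p` player 1 uses, the conditional expected
payoff from time `n` on is at most `V_n`: pull the `F_n`-measurable stage quantities out of the
conditional expectation and use the tower property and the stage saddle inequality.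
Symmetrically it is at least `V_n` against `p*`, so `R(p, q*) ≤ E[V_1] ≤ R(p*, q)`.
Since `R` is bounded by an integrable quantity, the saddle point gives the minimax equality.
-/

open Set

theorem ciSup_ciInf_eq_ciInf_ciSup_of_saddle {ι κ α : Type*} [ConditionallyCompleteLattice α]
    {f : ι → κ → α} {i₀ : ι} {j₀ : κ} (hbelow : ∀ i, BddBelow (range (f i)))
    (habove : ∀ j, BddAbove (range (f · j))) (hsaddle : ∀ i j, f i j₀ ≤ f i₀ j) :
    ⨆ i, ⨅ j, f i j = ⨅ j, ⨆ i, f i j := by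
  have : Nonempty ι := ⟨i₀⟩
  have : Nonempty κ := ⟨j₀⟩
  have hinf_le (i : ι) : ⨅ j, f i j ≤ f i₀ j₀ := (ciInf_le (hbelow i) j₀).trans (hsaddle i j₀)
  have le_hsup (j : κ) : f i₀ j₀ ≤ ⨆ i, f i j := (hsaddle i₀ j).trans (le_ciSup (habove j) i₀)
  have hsup_inf : ⨆ i, ⨅ j, f i j = f i₀ j₀ :=
    le_antisymm (ciSup_le hinf_le)
      ((le_ciInf (hsaddle i₀)).trans (le_ciSup ⟨_, forall_mem_range.2 hinf_le⟩ i₀))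
  have hinf_sup : ⨅ j, ⨆ i, f i j = f i₀ j₀ :=
    le_antisymm ((ciInf_le ⟨_, forall_mem_range.2 le_hsup⟩ j₀).trans (ciSup_le (hsaddle · j₀)))
      (le_ciInf le_hsup)
  rw [hsup_inf, hinf_sup]

namespace StoppingGame

/-- Player 1 stops with probability `a`, player 2 with probability `b`; player 1 receives `x` if
only he stops, `y` if only player 2 stops, `w` if both stop and `c` if the game goes on. -/
def stagePayoff (x y w c a b : ℝ) : ℝ :=
  a * (1 - b) * x + (1 - a) * b * y + a * b * w + (1 - a) * (1 - b) * c

/- The four tests look for a saddle point in pure strategies; failing them, the unique saddle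
point is completely mixed and makes each player indifferent between stopping and continuing. -/
def saddleRow (x y w c : ℝ) : ℝ :=
  if y ≤ w ∧ w ≤ x then 1 else if c ≤ x ∧ x ≤ w then 1
  else if w ≤ y ∧ y ≤ c then 0 else if x ≤ c ∧ c ≤ y then 0
  else (c - y) / (w - x - y + c)

def saddleCol (x y w c : ℝ) : ℝ :=
  if y ≤ w ∧ w ≤ x then 1 else if c ≤ x ∧ x ≤ w then 0
  else if w ≤ y ∧ y ≤ c then 1 else if x ≤ c ∧ c ≤ y then 0
  else (c - x) / (w - x - y + c)

def stageValue (x y w c : ℝ) : ℝ :=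
  stagePayoff x y w c (saddleRow x y w c) (saddleCol x y w c)

section StageGame

variable {x y w c : ℝ}

lemma stagePayoff_sub_left (a a' b : ℝ) :
    stagePayoff x y w c a' b - stagePayoff x y w c a b =
      (a' - a) * (b * (w - y) + (1 - b) * (x - c)) := by
  unfold stagePayoff; ring

lemma stagePayoff_sub_right (a b b' : ℝ) :
    stagePayoff x y w c a b' - stagePayoff x y w c a b =
      (b' - b) * (a * (w - x) + (1 - a) * (y - c)) := by
  unfold stagePayoff; ring

lemma stagePayoff_neg_swap (a b : ℝ) :
    stagePayoff (-y) (-x) (-w) (-c) b a = -stagePayoff x y w c a b := by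
  unfold stagePayoff; ring

lemma stagePayoff_le_of_slopes {a b a' b' : ℝ}
    (hrow : ∀ s ∈ unitInterval, (s - a) * (b * (w - y) + (1 - b) * (x - c)) ≤ 0)
    (hcol : ∀ t ∈ unitInterval, 0 ≤ (t - b) * (a * (w - x) + (1 - a) * (y - c)))
    (ha' : a' ∈ unitInterval) (hb' : b' ∈ unitInterval) :
    stagePayoff x y w c a' b ≤ stagePayoff x y w c a b' := by
  linarith [hrow a' ha', hcol b' hb',
    stagePayoff_sub_left (x := x) (y := y) (w := w) (c := c) a a' b,
    stagePayoff_sub_right (x := x) (y := y) (w := w) (c := c) a b b']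

lemma strictOrder_of_no_pure_saddle (h₁ : ¬(y ≤ w ∧ w ≤ x)) (h₂ : ¬(c ≤ x ∧ x ≤ w))
    (h₃ : ¬(w ≤ y ∧ y ≤ c)) (h₄ : ¬(x ≤ c ∧ c ≤ y)) :
    (x < w ∧ y < c ∧ y < w ∧ x < c) ∨ (w < x ∧ c < y ∧ w < y ∧ c < x) := by
  grind

lemma div_mem_unitInterval {u d : ℝ} (h : 0 ≤ u ∧ u ≤ d ∨ d ≤ u ∧ u ≤ 0) :
    u / d ∈ unitInterval := by
  rcases h with ⟨hu, hud⟩ | ⟨hdu, hu⟩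
  · exact unitInterval.div_mem hu (hu.trans hud) hud
  · exact ⟨div_nonneg_of_nonpos hu (hdu.trans hu), div_le_one_of_ge hdu (hdu.trans hu)⟩

theorem stagePayoff_saddle (x y w c : ℝ) :
    saddleRow x y w c ∈ unitInterval ∧ saddleCol x y w c ∈ unitInterval ∧
      ∀ a ∈ unitInterval, ∀ b ∈ unitInterval,
        stagePayoff x y w c a (saddleCol x y w c) ≤ stagePayoff x y w c (saddleRow x y w c) b := by
  unfold saddleRow saddleCol
  split_ifs with h₁ h₂ h₃ h₄
  iterate 4
    exact ⟨by norm_num, by norm_num, fun a ha b hb => stagePayoff_le_of_slopes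
      (fun s hs => by nlinarith [hs.1, hs.2]) (fun t ht => by nlinarith [ht.1, ht.2]) ha hb⟩
  have hmix := strictOrder_of_no_pure_saddle h₁ h₂ h₃ h₄
  have hd : w - x - y + c ≠ 0 := by
    rcases hmix with h | h
    exacts [(show 0 < w - x - y + c by linarith).ne', (show w - x - y + c < 0 by linarith).ne]
  have hrow :
      (c - x) / (w - x - y + c) * (w - y) + (1 - (c - x) / (w - x - y + c)) * (x - c) = 0 := by
    field_simp; ring
  have hcol :
      (c - y) / (w - x - y + c) * (w - x) + (1 - (c - y) / (w - x - y + c)) * (y - c) = 0 := by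
    field_simp; ring
  refine ⟨div_mem_unitInterval (hmix.imp (fun h => ⟨by linarith, by linarith⟩)
      (fun h => ⟨by linarith, by linarith⟩)),
    div_mem_unitInterval (hmix.imp (fun h => ⟨by linarith, by linarith⟩)
      (fun h => ⟨by linarith, by linarith⟩)),
    fun a ha b hb => stagePayoff_le_of_slopes (fun _ _ => by rw [hrow, mul_zero])
      (fun _ _ => by rw [hcol, mul_zero]) ha hb⟩

end StageGame

section Measurability

variable {Ω : Type*} {m : MeasurableSpace Ω} {x y w c : Ω → ℝ}

lemma measurableSet_le_and_le {f g h : Ω → ℝ} (hf : Measurable f) (hg : Measurable g)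
    (hh : Measurable h) : MeasurableSet {ω | f ω ≤ g ω ∧ g ω ≤ h ω} :=
  (measurableSet_le hf hg).inter (measurableSet_le hg hh)

lemma measurable_saddleRow (hx : Measurable x) (hy : Measurable y) (hw : Measurable w)
    (hc : Measurable c) : Measurable fun ω => saddleRow (x ω) (y ω) (w ω) (c ω) :=
  .ite (measurableSet_le_and_le hy hw hx) measurable_const <|
    .ite (measurableSet_le_and_le hc hx hw) measurable_const <|
    .ite (measurableSet_le_and_le hw hy hc) measurable_const <|
    .ite (measurableSet_le_and_le hx hc hy) measurable_const <| by fun_prop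

lemma measurable_saddleCol (hx : Measurable x) (hy : Measurable y) (hw : Measurable w)
    (hc : Measurable c) : Measurable fun ω => saddleCol (x ω) (y ω) (w ω) (c ω) :=
  .ite (measurableSet_le_and_le hy hw hx) measurable_const <|
    .ite (measurableSet_le_and_le hc hx hw) measurable_const <|
    .ite (measurableSet_le_and_le hw hy hc) measurable_const <|
    .ite (measurableSet_le_and_le hx hc hy) measurable_const <| by fun_prop

end Measurability

section StagePayoffProcess

variable {Ω : Type*} {m : MeasurableSpace Ω} {μ : Measure Ω} {x y w c a b : Ω → ℝ}

lemma one_sub_mul_one_sub_mem {a b : ℝ} (ha : a ∈ unitInterval) (hb : b ∈ unitInterval) :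
    (1 - a) * (1 - b) ∈ unitInterval :=
  unitInterval.mul_mem (Icc.mem_iff_one_sub_mem.1 ha) (Icc.mem_iff_one_sub_mem.1 hb)

lemma stagePayoff_mono {x y w c c' a b : ℝ} (ha : a ∈ unitInterval) (hb : b ∈ unitInterval)
    (hc : c ≤ c') : stagePayoff x y w c a b ≤ stagePayoff x y w c' a b := by
  have := (one_sub_mul_one_sub_mem ha hb).1
  unfold stagePayoff
  nlinarith

lemma abs_stagePayoff_le {x y w c a b : ℝ} (ha : a ∈ unitInterval) (hb : b ∈ unitInterval) :
    |stagePayoff x y w c a b| ≤ |x| + |y| + |w| + |c| := by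
  have ha' := Icc.mem_iff_one_sub_mem.1 ha
  have hb' := Icc.mem_iff_one_sub_mem.1 hb
  have key {s : ℝ} (hs : s ∈ unitInterval) (t : ℝ) : |s * t| ≤ |t| := by
    rw [abs_mul, abs_of_nonneg hs.1]
    exact mul_le_of_le_one_left (abs_nonneg t) hs.2
  unfold stagePayoff
  linarith [abs_add_three (a * (1 - b) * x) ((1 - a) * b * y) (a * b * w),
    abs_add_le (a * (1 - b) * x + (1 - a) * b * y + a * b * w) ((1 - a) * (1 - b) * c),
    key (unitInterval.mul_mem ha hb') x, key (unitInterval.mul_mem ha' hb) y,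
    key (unitInterval.mul_mem ha hb) w, key (unitInterval.mul_mem ha' hb') c]

lemma integrable_stagePayoff (hx : Integrable x μ) (hy : Integrable y μ) (hw : Integrable w μ)
    (hc : Integrable c μ) (ha : AEStronglyMeasurable a μ) (hb : AEStronglyMeasurable b μ)
    (ha₁ : ∀ ω, a ω ∈ unitInterval) (hb₁ : ∀ ω, b ω ∈ unitInterval) :
    Integrable (fun ω => stagePayoff (x ω) (y ω) (w ω) (c ω) (a ω) (b ω)) μ := by
  refine (((hx.abs.add hy.abs).add hw.abs).add hc.abs).mono' ?_
    (ae_of_all _ fun ω => abs_stagePayoff_le (ha₁ ω) (hb₁ ω))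
  have := hx.aestronglyMeasurable; have := hy.aestronglyMeasurable
  have := hw.aestronglyMeasurable; have := hc.aestronglyMeasurable
  unfold stagePayoff
  fun_prop

lemma condExp_stagePayoff [IsFiniteMeasure μ] {m' : MeasurableSpace Ω} (hm : m' ≤ m)
    (hx : Measurable[m'] x) (hy : Measurable[m'] y) (hw : Measurable[m'] w)
    (ha : Measurable[m'] a) (hb : Measurable[m'] b) (hxi : Integrable x μ)
    (hyi : Integrable y μ) (hwi : Integrable w μ) (hc : Integrable c μ)
    (ha₁ : ∀ ω, a ω ∈ unitInterval) (hb₁ : ∀ ω, b ω ∈ unitInterval) :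
    μ[fun ω => stagePayoff (x ω) (y ω) (w ω) (c ω) (a ω) (b ω) | m'] =ᵐ[μ]
      fun ω => stagePayoff (x ω) (y ω) (w ω) (μ[c | m'] ω) (a ω) (b ω) := by
  set s : Ω → ℝ := fun ω => stagePayoff (x ω) (y ω) (w ω) 0 (a ω) (b ω)
  set d : Ω → ℝ := fun ω => (1 - a ω) * (1 - b ω)
  have hsplit (f : Ω → ℝ) :
      (fun ω => stagePayoff (x ω) (y ω) (w ω) (f ω) (a ω) (b ω)) = s + d * f := by
    ext ω; simp only [s, d, stagePayoff, Pi.add_apply, Pi.mul_apply]; ring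
  have hd : StronglyMeasurable[m'] d := by fun_prop
  have hd₁ : ∀ ω, ‖d ω‖ ≤ 1 := fun ω => by
    have := one_sub_mul_one_sub_mem (ha₁ ω) (hb₁ ω)
    rw [Real.norm_eq_abs, abs_of_nonneg this.1]
    exact this.2
  have hsi : Integrable s μ :=
    integrable_stagePayoff hxi hyi hwi (integrable_const 0) (ha.mono hm le_rfl).aestronglyMeasurable
      (hb.mono hm le_rfl).aestronglyMeasurable ha₁ hb₁
  have hs : μ[s | m'] = s :=
    condExp_of_stronglyMeasurable hm (by unfold s stagePayoff; fun_prop) hsi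
  rw [hsplit, hsplit]
  calc μ[s + d * c | m'] =ᵐ[μ] μ[s | m'] + μ[d * c | m'] :=
        condExp_add hsi (hc.bdd_mul (hd.mono hm).aestronglyMeasurable (ae_of_all _ hd₁)) m'
    _ =ᵐ[μ] s + d * μ[c | m'] := by
        rw [hs]
        exact Filter.EventuallyEq.rfl.add
          (condExp_stronglyMeasurable_mul_of_bound hm hd hc 1 (ae_of_all _ hd₁))

end StagePayoffProcess

section PayoffToGo

variable {Ω : Type*} {N n : ℕ} {X Y W p q : ℕ → Ω → ℝ}

variable (N X Y W p q) in
def payoffToGo (n : ℕ) (ω : Ω) : ℝ :=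
  ∑ k ∈ Finset.Icc n N, (∏ j ∈ Finset.Ico n k, (1 - p j ω) * (1 - q j ω)) *
    (p k ω * (1 - q k ω) * X k ω + (1 - p k ω) * q k ω * Y k ω + p k ω * q k ω * W k ω)

lemma payoffToGo_of_lt (h : N < n) : payoffToGo N X Y W p q n = 0 := by
  ext ω
  simp [payoffToGo, Finset.Icc_eq_empty_of_lt h]

lemma payoffToGo_eq_stagePayoff (h : n ≤ N) :
    payoffToGo N X Y W p q n = fun ω =>
      stagePayoff (X n ω) (Y n ω) (W n ω) (payoffToGo N X Y W p q (n + 1) ω) (p n ω) (q n ω) := by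
  ext ω
  rw [payoffToGo, Finset.Icc_eq_cons_Ioc h, Finset.sum_cons, Finset.Ico_self, Finset.prod_empty,
    one_mul, ← Finset.Icc_add_one_left_eq_Ioc, payoffToGo]
  have hsplit : ∀ k ∈ Finset.Icc (n + 1) N, ∏ j ∈ Finset.Ico n k, (1 - p j ω) * (1 - q j ω) =
      (1 - p n ω) * (1 - q n ω) * ∏ j ∈ Finset.Ico (n + 1) k, (1 - p j ω) * (1 - q j ω) :=
    fun k hk => Finset.prod_eq_prod_Ico_succ_bot (by simp at hk; omega) _
  rw [Finset.sum_congr rfl fun k hk => by rw [hsplit k hk, mul_assoc], ← Finset.mul_sum]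
  unfold stagePayoff
  ring

lemma payoffToGo_self (hpN : ∀ ω, p N ω = 1) (hqN : ∀ ω, q N ω = 1) :
    payoffToGo N X Y W p q N = W N := by
  ext ω
  simp [payoffToGo_eq_stagePayoff le_rfl, payoffToGo_of_lt N.lt_succ_self, hpN, hqN, stagePayoff]

lemma payoffToGo_neg_swap (n : ℕ) (ω : Ω) :
    payoffToGo N (-Y) (-X) (-W) q p n ω = -payoffToGo N X Y W p q n ω := by
  simp only [payoffToGo, Pi.neg_apply, ← Finset.sum_neg_distrib]
  refine Finset.sum_congr rfl fun k _ => ?_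
  rw [Finset.prod_congr rfl fun j _ => mul_comm (1 - q j ω) (1 - p j ω)]
  ring

lemma randPayoff_eq_integral_payoffToGo {m : MeasurableSpace Ω} (P : Measure Ω) :
    randPayoff P N X Y W p q = ∫ ω, payoffToGo N X Y W p q 1 ω ∂P := by
  have hIco (k : ℕ) : Finset.Icc 1 (k - 1) = Finset.Ico 1 k := by ext; simp; omega
  simp only [randPayoff, payoffToGo, hIco]

lemma randPayoff_neg_swap {m : MeasurableSpace Ω} (P : Measure Ω) :
    randPayoff P N (-Y) (-X) (-W) q p = -randPayoff P N X Y W p q := by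
  simp only [randPayoff_eq_integral_payoffToGo, payoffToGo_neg_swap, integral_neg]

lemma abs_payoffToGo_le (hp : ∀ k, 1 ≤ k → k ≤ N → ∀ ω, p k ω ∈ unitInterval)
    (hq : ∀ k, 1 ≤ k → k ≤ N → ∀ ω, q k ω ∈ unitInterval) (hn : 1 ≤ n) (ω : Ω) :
    |payoffToGo N X Y W p q n ω| ≤ ∑ k ∈ Finset.Icc n N, (|X k ω| + |Y k ω| + |W k ω|) := by
  rcases lt_or_ge N n with hNn | hnN
  · simp [payoffToGo_of_lt hNn, Finset.Icc_eq_empty_of_lt hNn]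
  refine Nat.decreasingInduction' (fun k hk hnk ih => ?_) (hnN.trans N.le_succ) ?_
  · have hkN : k ≤ N := Nat.lt_succ_iff.1 hk
    rw [payoffToGo_eq_stagePayoff hkN, Finset.Icc_eq_cons_Ioc hkN, Finset.sum_cons,
      ← Finset.Icc_add_one_left_eq_Ioc]
    linarith [abs_stagePayoff_le (x := X k ω) (y := Y k ω) (w := W k ω)
      (c := payoffToGo N X Y W p q (k + 1) ω) (hp k (hn.trans hnk) hkN ω)
      (hq k (hn.trans hnk) hkN ω)]
  · simp [payoffToGo_of_lt N.lt_succ_self]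

variable {m : MeasurableSpace Ω} {P : Measure Ω}

lemma abs_randPayoff_le
    (hint : ∀ n, 1 ≤ n → n ≤ N → Integrable (X n) P ∧ Integrable (Y n) P ∧ Integrable (W n) P)
    (hp : ∀ k, 1 ≤ k → k ≤ N → ∀ ω, p k ω ∈ unitInterval)
    (hq : ∀ k, 1 ≤ k → k ≤ N → ∀ ω, q k ω ∈ unitInterval) :
    |randPayoff P N X Y W p q| ≤
      ∫ ω, ∑ k ∈ Finset.Icc 1 N, (|X k ω| + |Y k ω| + |W k ω|) ∂P := by
  rw [randPayoff_eq_integral_payoffToGo, ← Real.norm_eq_abs]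
  refine norm_integral_le_of_norm_le (integrable_finsetSum _ fun k hk => ?_)
    (ae_of_all _ fun ω => abs_payoffToGo_le hp hq le_rfl ω)
  obtain ⟨hX, hY, hW⟩ := hint k (Finset.mem_Icc.1 hk).1 (Finset.mem_Icc.1 hk).2
  exact (hX.abs.add hY.abs).add hW.abs

variable {F : Filtration ℕ m}

lemma integrable_payoffToGo
    (hint : ∀ n, 1 ≤ n → n ≤ N → Integrable (X n) P ∧ Integrable (Y n) P ∧ Integrable (W n) P)
    (hp : IsRandStrat F N p) (hq : IsRandStrat F N q) (hn : 1 ≤ n) :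
    Integrable (payoffToGo N X Y W p q n) P := by
  rcases lt_or_ge N n with hNn | hnN
  · rw [payoffToGo_of_lt hNn]; exact integrable_zero _ _ _
  refine Nat.decreasingInduction' (fun k hk hnk ih => ?_) (hnN.trans N.le_succ) ?_
  · have h1k : 1 ≤ k := hn.trans hnk
    have hkN : k ≤ N := Nat.lt_succ_iff.1 hk
    obtain ⟨hX, hY, hW⟩ := hint k h1k hkN
    rw [payoffToGo_eq_stagePayoff hkN]
    exact integrable_stagePayoff hX hY hW ih
      (((hp.1 k h1k hkN).1.mono (F.le k) le_rfl).aestronglyMeasurable)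
      (((hq.1 k h1k hkN).1.mono (F.le k) le_rfl).aestronglyMeasurable)
      (hp.1 k h1k hkN).2 (hq.1 k h1k hkN).2
  · rw [payoffToGo_of_lt N.lt_succ_self]; exact integrable_zero _ _ _

end PayoffToGo

section Comparison

variable {Ω : Type*} {m : MeasurableSpace Ω} {P : Measure Ω} [IsFiniteMeasure P]
  {F : Filtration ℕ m} {N : ℕ} {X Y W p q V : ℕ → Ω → ℝ}

variable
    (hadapt : ∀ n, 1 ≤ n → n ≤ N →
      Measurable[F n] (X n) ∧ Measurable[F n] (Y n) ∧ Measurable[F n] (W n))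
    (hint : ∀ n, 1 ≤ n → n ≤ N → Integrable (X n) P ∧ Integrable (Y n) P ∧ Integrable (W n) P)
    (hp : IsRandStrat F N p) (hq : IsRandStrat F N q) (hVN : V N = W N)
    (hVint : ∀ n, 1 ≤ n → n ≤ N → Integrable (V n) P)
    (hV : ∀ n, 1 ≤ n → n < N → (fun ω => stagePayoff (X n ω) (Y n ω) (W n ω)
      (P[V (n + 1) | F n] ω) (p n ω) (q n ω)) ≤ᵐ[P] V n)
include hadapt hint hp hq hVN hVint hV

theorem condExp_payoffToGo_le {n : ℕ} (hn : 1 ≤ n) (hnN : n ≤ N) :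
    P[payoffToGo N X Y W p q n | F n] ≤ᵐ[P] V n := by
  refine Nat.decreasingInduction' (fun k hkN hnk ih => ?_) hnN ?_
  · have h1k : 1 ≤ k := hn.trans hnk
    obtain ⟨hX, hY, hW⟩ := hadapt k h1k hkN.le
    obtain ⟨hXi, hYi, hWi⟩ := hint k h1k hkN.le
    have hcont : P[payoffToGo N X Y W p q (k + 1) | F k] ≤ᵐ[P] P[V (k + 1) | F k] :=
      (condExp_condExp_of_le (F.mono k.le_succ) (F.le (k + 1))).symm.trans_le
        (condExp_mono integrable_condExp (hVint (k + 1) (by omega) hkN) ih)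
    calc P[payoffToGo N X Y W p q k | F k]
        =ᵐ[P] fun ω => stagePayoff (X k ω) (Y k ω) (W k ω)
          (P[payoffToGo N X Y W p q (k + 1) | F k] ω) (p k ω) (q k ω) := by
          rw [payoffToGo_eq_stagePayoff hkN.le]
          exact condExp_stagePayoff (F.le k) hX hY hW (hp.1 k h1k hkN.le).1
            (hq.1 k h1k hkN.le).1 hXi hYi hWi (integrable_payoffToGo hint hp hq (by omega))
            (hp.1 k h1k hkN.le).2 (hq.1 k h1k hkN.le).2
      _ ≤ᵐ[P] fun ω => stagePayoff (X k ω) (Y k ω) (W k ω)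
          (P[V (k + 1) | F k] ω) (p k ω) (q k ω) := by
          filter_upwards [hcont] with ω hω
          exact stagePayoff_mono ((hp.1 k h1k hkN.le).2 ω) ((hq.1 k h1k hkN.le).2 ω) hω
      _ ≤ᵐ[P] V k := hV k h1k hkN
  · obtain ⟨-, -, hW⟩ := hadapt N (hn.trans hnN) le_rfl
    rw [payoffToGo_self hp.2 hq.2, condExp_of_stronglyMeasurable (F.le N) hW.stronglyMeasurable
      (hint N (hn.trans hnN) le_rfl).2.2, hVN]

theorem randPayoff_le_integral (hN : 1 ≤ N) : randPayoff P N X Y W p q ≤ ∫ ω, V 1 ω ∂P := by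
  rw [randPayoff_eq_integral_payoffToGo, ← integral_condExp (F.le 1)]
  exact integral_mono_ae integrable_condExp (hVint 1 le_rfl hN)
    (condExp_payoffToGo_le hadapt hint hp hq hVN hVint hV le_rfl hN)

end Comparison

section Value

variable {Ω : Type*} {m : MeasurableSpace Ω}

variable (P : Measure Ω) (F : Filtration ℕ m) (N : ℕ) (X Y W : ℕ → Ω → ℝ)

def value (n : ℕ) : Ω → ℝ :=
  if n < N then fun ω => stageValue (X n ω) (Y n ω) (W n ω) (P[value (n + 1) | F n] ω) else W n
termination_by N - n

def optRow (n : ℕ) : Ω → ℝ :=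
  if n < N then fun ω => saddleRow (X n ω) (Y n ω) (W n ω) (P[value P F N X Y W (n + 1) | F n] ω)
  else fun _ => 1

def optCol (n : ℕ) : Ω → ℝ :=
  if n < N then fun ω => saddleCol (X n ω) (Y n ω) (W n ω) (P[value P F N X Y W (n + 1) | F n] ω)
  else fun _ => 1

variable {P F N X Y W} {n : ℕ}

lemma value_of_lt (h : n < N) : value P F N X Y W n = fun ω =>
    stageValue (X n ω) (Y n ω) (W n ω) (P[value P F N X Y W (n + 1) | F n] ω) := by
  rw [value, if_pos h]

lemma value_self : value P F N X Y W N = W N := by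
  rw [value, if_neg (lt_irrefl N)]

lemma optRow_of_lt (h : n < N) : optRow P F N X Y W n = fun ω =>
    saddleRow (X n ω) (Y n ω) (W n ω) (P[value P F N X Y W (n + 1) | F n] ω) := if_pos h

lemma optCol_of_lt (h : n < N) : optCol P F N X Y W n = fun ω =>
    saddleCol (X n ω) (Y n ω) (W n ω) (P[value P F N X Y W (n + 1) | F n] ω) := if_pos h

variable (hadapt : ∀ n, 1 ≤ n → n ≤ N →
  Measurable[F n] (X n) ∧ Measurable[F n] (Y n) ∧ Measurable[F n] (W n))
include hadapt

lemma isRandStrat_optRow : IsRandStrat F N (optRow P F N X Y W) := by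
  refine ⟨fun n hn hnN => ?_, fun ω => by simp [optRow]⟩
  obtain ⟨hX, hY, hW⟩ := hadapt n hn hnN
  unfold optRow
  split_ifs
  · exact ⟨measurable_saddleRow hX hY hW stronglyMeasurable_condExp.measurable,
      fun ω => (stagePayoff_saddle _ _ _ _).1⟩
  · exact ⟨measurable_const, fun _ => unitInterval.one_mem⟩

lemma isRandStrat_optCol : IsRandStrat F N (optCol P F N X Y W) := by
  refine ⟨fun n hn hnN => ?_, fun ω => by simp [optCol]⟩
  obtain ⟨hX, hY, hW⟩ := hadapt n hn hnN
  unfold optCol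
  split_ifs
  · exact ⟨measurable_saddleCol hX hY hW stronglyMeasurable_condExp.measurable,
      fun ω => (stagePayoff_saddle _ _ _ _).2.1⟩
  · exact ⟨measurable_const, fun _ => unitInterval.one_mem⟩

variable (hint : ∀ n, 1 ≤ n → n ≤ N →
  Integrable (X n) P ∧ Integrable (Y n) P ∧ Integrable (W n) P)
include hint

lemma integrable_value (hn : 1 ≤ n) (hnN : n ≤ N) : Integrable (value P F N X Y W n) P := by
  obtain ⟨hXi, hYi, hWi⟩ := hint n hn hnN
  rcases hnN.lt_or_eq with h | rfl
  · obtain ⟨hX, hY, hW⟩ := hadapt n hn h.le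
    have hc := (stronglyMeasurable_condExp (μ := P) (m := F n)
      (f := value P F N X Y W (n + 1))).measurable
    rw [value_of_lt h]
    exact integrable_stagePayoff hXi hYi hWi integrable_condExp
      ((measurable_saddleRow hX hY hW hc).mono (F.le n) le_rfl).aestronglyMeasurable
      ((measurable_saddleCol hX hY hW hc).mono (F.le n) le_rfl).aestronglyMeasurable
      (fun _ => (stagePayoff_saddle _ _ _ _).1) (fun _ => (stagePayoff_saddle _ _ _ _).2.1)
  · rw [value_self]
    exact hWi

variable [IsFiniteMeasure P] (hN : 1 ≤ N)
include hN

theorem randPayoff_le_integral_value {p : ℕ → Ω → ℝ} (hp : IsRandStrat F N p) :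
    randPayoff P N X Y W p (optCol P F N X Y W) ≤ ∫ ω, value P F N X Y W 1 ω ∂P := by
  refine randPayoff_le_integral hadapt hint hp (isRandStrat_optCol (P := P) hadapt) value_self
    (fun n hn hnN => integrable_value hadapt hint hn hnN)
    (fun n hn hnN => ae_of_all _ fun ω => ?_) hN
  rw [value_of_lt hnN, optCol_of_lt hnN]
  exact (stagePayoff_saddle _ _ _ _).2.2 _ ((hp.1 n hn hnN.le).2 ω) _
    (stagePayoff_saddle _ _ _ _).2.1

theorem integral_value_le_randPayoff {q : ℕ → Ω → ℝ} (hq : IsRandStrat F N q) :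
    ∫ ω, value P F N X Y W 1 ω ∂P ≤ randPayoff P N X Y W (optRow P F N X Y W) q := by
  have hadapt_neg : ∀ n, 1 ≤ n → n ≤ N →
      Measurable[F n] ((-Y) n) ∧ Measurable[F n] ((-X) n) ∧ Measurable[F n] ((-W) n) :=
    fun n hn hnN => have h := hadapt n hn hnN; ⟨h.2.1.neg, h.1.neg, h.2.2.neg⟩
  have hint_neg : ∀ n, 1 ≤ n → n ≤ N →
      Integrable ((-Y) n) P ∧ Integrable ((-X) n) P ∧ Integrable ((-W) n) P :=
    fun n hn hnN => have h := hint n hn hnN; ⟨h.2.1.neg, h.1.neg, h.2.2.neg⟩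
  -- Player 2 faces player 1's problem in the game with negated payoffs and swapped roles.
  have key := randPayoff_le_integral (V := -value P F N X Y W) hadapt_neg hint_neg hq
    (isRandStrat_optRow (P := P) hadapt) (by rw [Pi.neg_apply, value_self]; rfl)
    (fun n hn hnN => (integrable_value hadapt hint hn hnN).neg) (fun n hn hnN => ?_) hN
  · simp only [randPayoff_neg_swap, Pi.neg_apply, integral_neg] at key
    linarith
  filter_upwards [condExp_neg (value P F N X Y W (n + 1)) (F n)] with ω hω
  simp only [Pi.neg_apply] at hω ⊢
  rw [hω, stagePayoff_neg_swap, neg_le_neg_iff, value_of_lt hnN, optRow_of_lt hnN]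
  exact (stagePayoff_saddle _ _ _ _).2.2 _ (stagePayoff_saddle _ _ _ _).1 _ ((hq.1 n hn hnN.le).2 ω)

end Value

end StoppingGame

open StoppingGame in
/-- (Yasuda.) For integrable adapted processes `X, Y, W` with *no
ordering assumption*, the randomized (mixed) extension of the Dynkin–Neveu stopping
game has a saddle point `(p*, q*)` in randomized stopping strategies:
`R(p,q*) ≤ R(p*,q*) ≤ R(p*,q)`; in particular the game has a value,
`sup_p inf_q R(p,q) = inf_q sup_p R(p,q)`. -/
theorem yasuda_randomized_saddle {Ω : Type*} {m : MeasurableSpace Ω}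
    (P : Measure Ω) [IsProbabilityMeasure P] (F : Filtration ℕ m)
    (N : ℕ) (hN : 1 ≤ N) (X Y W : ℕ → Ω → ℝ)
    (hadapt : ∀ n, 1 ≤ n → n ≤ N →
      Measurable[F n] (X n) ∧ Measurable[F n] (Y n) ∧ Measurable[F n] (W n))
    (hint : ∀ n, 1 ≤ n → n ≤ N →
      Integrable (X n) P ∧ Integrable (Y n) P ∧ Integrable (W n) P) :
    ∃ ps qs : ℕ → Ω → ℝ, IsRandStrat F N ps ∧ IsRandStrat F N qs ∧
      (∀ p q : ℕ → Ω → ℝ, IsRandStrat F N p → IsRandStrat F N q →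
        randPayoff P N X Y W p qs ≤ randPayoff P N X Y W ps qs ∧
          randPayoff P N X Y W ps qs ≤ randPayoff P N X Y W ps q) ∧
      (⨆ p : {p : ℕ → Ω → ℝ // IsRandStrat F N p},
          ⨅ q : {q : ℕ → Ω → ℝ // IsRandStrat F N q}, randPayoff P N X Y W p.1 q.1) =
        ⨅ q : {q : ℕ → Ω → ℝ // IsRandStrat F N q},
          ⨆ p : {p : ℕ → Ω → ℝ // IsRandStrat F N p}, randPayoff P N X Y W p.1 q.1 := by
  set ps := optRow P F N X Y W
  set qs := optCol P F N X Y W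
  have hps : IsRandStrat F N ps := isRandStrat_optRow hadapt
  have hqs : IsRandStrat F N qs := isRandStrat_optCol hadapt
  have hsaddle : ∀ p q, IsRandStrat F N p → IsRandStrat F N q →
      randPayoff P N X Y W p qs ≤ randPayoff P N X Y W ps q := fun p q hp hq =>
    (randPayoff_le_integral_value hadapt hint hN hp).trans
      (integral_value_le_randPayoff hadapt hint hN hq)
  refine ⟨ps, qs, hps, hqs, fun p q hp hq => ⟨hsaddle p qs hp hqs, hsaddle ps q hps hq⟩, ?_⟩
  have hbdd (p q : {p : ℕ → Ω → ℝ // IsRandStrat F N p}) := abs_le.1 <|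
    abs_randPayoff_le (P := P) hint (fun n hn hnN => (p.2.1 n hn hnN).2)
      (fun n hn hnN => (q.2.1 n hn hnN).2)
  exact ciSup_ciInf_eq_ciInf_ciSup_of_saddle (i₀ := ⟨ps, hps⟩) (j₀ := ⟨qs, hqs⟩)
    (fun p => ⟨_, forall_mem_range.2 fun q => (hbdd p q).1⟩)
    (fun q => ⟨_, forall_mem_range.2 fun p => (hbdd p q).2⟩) fun p q => hsaddle _ _ p.2 q.2

end
end

section
/- Let (Ω,F,P) be a probability space with filtration (F_n)_{n=1}^N and let (X_n), (Y_n), (W_n), n = 1,…,N, be integrable real-valued processes adapted to (F_n) satisfying X_n ≤ W_n ≤ Y_n almost surely for every n. For stopping times λ, μ with values in {1,…,N} define R(λ,μ) = E[ X_λ·1_{λ<μ} + W_λ·1_{λ=μ} + Y_μ·1_{μ<λ} ]. Then there exist stopping times λ*, μ* with values in {1,…,N} forming a saddle point: R(λ,μ*) ≤ R(λ*,μ*) ≤ R(λ*,μ) for all stopping times λ, μ with values in {1,…,N}. -/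
/-!
Backward induction: `V_N = W_N` and `V_n = min (Y_n, max (X_n, E[V_{n+1} | F_n]))` for `n < N`.
Player 1 stops at the first `λ*` with `E[V_{n+1} | F_n] ≤ X_n`, player 2 at the first `μ*` with
`Y_n ≤ E[V_{n+1} | F_n]`. Before `μ*` we have `E[V_{n+1} | F_n] ≤ V_n`, so `V` is a supermartingale
up to `min λ μ*`; as the reward is at most `V_{min λ μ*}` pointwise, `R(λ, μ*) ≤ E[V_1]`.
Symmetrically `V` is a submartingale up to `min λ* μ`, the reward is at least `V_{min λ* μ}`, and
`E[V_1] ≤ R(λ*, μ)`. Together these give the saddle point, with value `E[V_1]`.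
-/

open MeasureTheory

noncomputable section

/-- The expected payoff of Neveu's stopping game:
`R(λ,μ) = E[X_λ·1_{λ<μ} + W_λ·1_{λ=μ} + Y_μ·1_{μ<λ}]`. -/
def neveuPayoff {Ω : Type*} [MeasurableSpace Ω] (P : Measure Ω)
    (X Y W : ℕ → Ω → ℝ) (lam mu : Ω → ℕ) : ℝ :=
  ∫ ω, (if lam ω < mu ω then X (lam ω) ω
        else if lam ω = mu ω then W (lam ω) ω
        else Y (mu ω) ω) ∂P

section OptionalStopping

variable {Ω : Type*} {m : MeasurableSpace Ω} {F : Filtration ℕ m}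

lemma measurableSet_lt_of_isStoppingTime_coe {τ : Ω → ℕ}
    (hτ : IsStoppingTime F (fun ω => (τ ω : WithTop ℕ))) (n : ℕ) :
    MeasurableSet[F n] {ω | n < τ ω} := by
  simpa only [Nat.cast_withTop, WithTop.coe_lt_coe] using hτ.measurableSet_gt n

lemma measurable_of_isStoppingTime_coe {τ : Ω → ℕ}
    (hτ : IsStoppingTime F (fun ω => (τ ω : WithTop ℕ))) : Measurable τ := by
  refine measurable_to_countable' fun n => F.le n _ ?_
  have h := hτ.measurableSet_eq n
  simp only [Nat.cast_withTop, WithTop.coe_inj] at h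
  exact h

lemma isStoppingTime_min_coe {τ σ : Ω → ℕ} (hτ : IsStoppingTime F (fun ω => (τ ω : WithTop ℕ)))
    (hσ : IsStoppingTime F (fun ω => (σ ω : WithTop ℕ))) :
    IsStoppingTime F (fun ω => ((min (τ ω) (σ ω) : ℕ) : WithTop ℕ)) := by
  simpa only [Nat.cast_withTop, WithTop.coe_min] using hτ.min hσ

lemma isStoppingTime_hittingBtwn_of_measurable {β : Type*} [MeasurableSpace β]
    {u : ℕ → Ω → β} {s : Set β} (hs : MeasurableSet s) {a b : ℕ}
    (hu : ∀ n, a ≤ n → n < b → Measurable[F n] (u n)) :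
    IsStoppingTime F (fun ω => ((hittingBtwn u s a b ω : ℕ) : WithTop ℕ)) := by
  intro i
  rcases le_or_gt b i with hi | hi
  · have h_le : ∀ ω, hittingBtwn u s a b ω ≤ i := fun ω => (hittingBtwn_le ω).trans hi
    simp [h_le]
  · have h_eq : {ω | hittingBtwn u s a b ω ≤ i} = ⋃ j ∈ Set.Icc a i, u j ⁻¹' s := by
      ext; simp [hittingBtwn_le_iff_of_lt _ hi]
    simpa only [Nat.cast_withTop, WithTop.coe_le_coe, h_eq] using
      MeasurableSet.biUnion (Set.to_countable _)
      fun j (hj : j ∈ Set.Icc a i) => F.mono hj.2 _ (hu j hj.1 (hj.2.trans_lt hi) hs)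

lemma integrable_comp_index_of_mem {E : Type*} [NormedAddCommGroup E] {P : Measure Ω}
    {f : ℕ → Ω → E} {τ : Ω → ℕ} {s : Finset ℕ} (hτ : Measurable τ) (hτs : ∀ ω, τ ω ∈ s)
    (hf : ∀ n ∈ s, Integrable (f n) P) : Integrable (fun ω => f (τ ω) ω) P := by
  have h_eq : (fun ω => f (τ ω) ω) = fun ω => ∑ n ∈ s, (τ ⁻¹' {n}).indicator (f n) ω := by
    ext ω
    rw [Finset.sum_eq_single_of_mem (f := fun n => (τ ⁻¹' {n}).indicator (f n) ω) (τ ω) (hτs ω)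
      (fun n _ hn => Set.indicator_of_notMem (s := τ ⁻¹' {n}) (fun h => hn (Eq.symm h)) _),
      Set.indicator_of_mem (Set.mem_preimage.2 (Set.mem_singleton _))]
  rw [h_eq]
  exact integrable_finsetSum _ fun n hn => (hf n hn).indicator (hτ (measurableSet_singleton n))

lemma sum_indicator_lt_sub_eq_sub (V : ℕ → Ω → ℝ) {τ : Ω → ℕ} {a b : ℕ} {ω : Ω}
    (hτ : τ ω ∈ Finset.Icc a b) :
    ∑ n ∈ Finset.Ico a b, {ω | n < τ ω}.indicator (fun ω => V (n + 1) ω - V n ω) ω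
      = V (τ ω) ω - V a ω := by
  obtain ⟨ha, hb⟩ := Finset.mem_Icc.1 hτ
  simp only [Set.indicator_apply, Set.mem_ofPred_eq]
  rw [← Finset.sum_filter, Finset.Ico_filter_lt, min_eq_right hb,
    Finset.sum_Ico_sub (fun n => V n ω) ha]

variable {P : Measure Ω} [IsFiniteMeasure P]

lemma integral_stopped_sub_eq_sum {V : ℕ → Ω → ℝ} {a b : ℕ} (hab : a ≤ b)
    (hV : ∀ n ∈ Finset.Icc a b, Integrable (V n) P) {τ : Ω → ℕ}
    (hτ : IsStoppingTime F (fun ω => (τ ω : WithTop ℕ))) (hτab : ∀ ω, τ ω ∈ Finset.Icc a b) :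
    ∫ ω, V (τ ω) ω ∂P - ∫ ω, V a ω ∂P
      = ∑ n ∈ Finset.Ico a b, ∫ ω in {ω | n < τ ω}, (P[V (n + 1) | F n] ω - V n ω) ∂P := by
  have hV_succ : ∀ n ∈ Finset.Ico a b, Integrable (V (n + 1)) P ∧ Integrable (V n) P := by
    intro n hn
    obtain ⟨h₁, h₂⟩ := Finset.mem_Ico.1 hn
    exact ⟨hV _ (Finset.mem_Icc.2 ⟨by omega, h₂⟩), hV _ (Finset.mem_Icc.2 ⟨h₁, h₂.le⟩)⟩
  have hA : ∀ n, MeasurableSet {ω | n < τ ω} := fun n =>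
    F.le n _ (measurableSet_lt_of_isStoppingTime_coe hτ n)
  calc ∫ ω, V (τ ω) ω ∂P - ∫ ω, V a ω ∂P
      = ∫ ω, (V (τ ω) ω - V a ω) ∂P :=
        (integral_sub (integrable_comp_index_of_mem (measurable_of_isStoppingTime_coe hτ) hτab hV)
          (hV a (Finset.mem_Icc.2 ⟨le_rfl, hab⟩))).symm
    _ = ∫ ω, ∑ n ∈ Finset.Ico a b,
          {ω | n < τ ω}.indicator (fun ω => V (n + 1) ω - V n ω) ω ∂P := by
        simp_rw [sum_indicator_lt_sub_eq_sub V (hτab _)]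
    _ = ∑ n ∈ Finset.Ico a b, ∫ ω in {ω | n < τ ω}, (V (n + 1) ω - V n ω) ∂P := by
        refine (integral_finsetSum _ fun n hn =>
          ((hV_succ n hn).1.sub (hV_succ n hn).2).indicator (hA n)).trans ?_
        simp_rw [integral_indicator (hA _), Pi.sub_apply]
    _ = _ := by
        refine Finset.sum_congr rfl fun n hn => ?_
        rw [integral_sub (hV_succ n hn).1.integrableOn (hV_succ n hn).2.integrableOn,
          integral_sub integrable_condExp.integrableOn (hV_succ n hn).2.integrableOn,
          setIntegral_condExp (F.le n) (hV_succ n hn).1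
            (measurableSet_lt_of_isStoppingTime_coe hτ n)]

lemma integral_stopped_le_of_condExp_le {V : ℕ → Ω → ℝ} {a b : ℕ} (hab : a ≤ b)
    (hV : ∀ n ∈ Finset.Icc a b, Integrable (V n) P) {τ : Ω → ℕ}
    (hτ : IsStoppingTime F (fun ω => (τ ω : WithTop ℕ))) (hτab : ∀ ω, τ ω ∈ Finset.Icc a b)
    (hsuper : ∀ ω n, a ≤ n → n < τ ω → P[V (n + 1) | F n] ω ≤ V n ω) :
    ∫ ω, V (τ ω) ω ∂P ≤ ∫ ω, V a ω ∂P := by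
  have h_sum := integral_stopped_sub_eq_sum hab hV hτ hτab
  have h_nonpos : ∑ n ∈ Finset.Ico a b,
      ∫ ω in {ω | n < τ ω}, (P[V (n + 1) | F n] ω - V n ω) ∂P ≤ 0 :=
    Finset.sum_nonpos fun n hn =>
      setIntegral_nonpos (F.le n _ (measurableSet_lt_of_isStoppingTime_coe hτ n)) fun ω hω =>
        sub_nonpos.2 (hsuper ω n (Finset.mem_Ico.1 hn).1 hω)
  linarith

lemma integral_le_stopped_of_le_condExp {V : ℕ → Ω → ℝ} {a b : ℕ} (hab : a ≤ b)
    (hV : ∀ n ∈ Finset.Icc a b, Integrable (V n) P) {τ : Ω → ℕ}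
    (hτ : IsStoppingTime F (fun ω => (τ ω : WithTop ℕ))) (hτab : ∀ ω, τ ω ∈ Finset.Icc a b)
    (hsub : ∀ ω n, a ≤ n → n < τ ω → V n ω ≤ P[V (n + 1) | F n] ω) :
    ∫ ω, V a ω ∂P ≤ ∫ ω, V (τ ω) ω ∂P := by
  have h_sum := integral_stopped_sub_eq_sum hab hV hτ hτab
  have h_nonneg : 0 ≤ ∑ n ∈ Finset.Ico a b,
      ∫ ω in {ω | n < τ ω}, (P[V (n + 1) | F n] ω - V n ω) ∂P :=
    Finset.sum_nonneg fun n hn =>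
      setIntegral_nonneg (F.le n _ (measurableSet_lt_of_isStoppingTime_coe hτ n)) fun ω hω =>
        sub_nonneg.2 (hsub ω n (Finset.mem_Ico.1 hn).1 hω)
  linarith

end OptionalStopping

namespace NeveuGame

variable {Ω : Type*} {m : MeasurableSpace Ω} (P : Measure Ω) (F : Filtration ℕ m) (N : ℕ)
  (X Y W : ℕ → Ω → ℝ)

def value (n : ℕ) : Ω → ℝ :=
  if h : n < N then fun ω => min (Y n ω) (max (X n ω) (P[value (n + 1) | F n] ω)) else W n
termination_by N - n

def continuation (n : ℕ) : Ω → ℝ := P[value P F N X Y W (n + 1) | F n]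

def reward (i j : ℕ) (ω : Ω) : ℝ :=
  if i < j then X i ω else if i = j then W i ω else Y j ω

def maxStop : Ω → ℕ :=
  hittingBtwn (fun n ω => continuation P F N X Y W n ω - X n ω) (Set.Iic 0) 1 N

def minStop : Ω → ℕ :=
  hittingBtwn (fun n ω => Y n ω - continuation P F N X Y W n ω) (Set.Iic 0) 1 N

variable {P F N X Y W}

lemma value_of_lt {n : ℕ} (hn : n < N) :
    value P F N X Y W n = fun ω => min (Y n ω) (max (X n ω) (continuation P F N X Y W n ω)) := by
  rw [value, dif_pos hn]
  rfl

lemma value_self : value P F N X Y W N = W N := by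
  rw [value, dif_neg (lt_irrefl N)]

lemma integrable_value (hX : ∀ n ∈ Finset.Icc 1 N, Integrable (X n) P)
    (hY : ∀ n ∈ Finset.Icc 1 N, Integrable (Y n) P) (hW : ∀ n ∈ Finset.Icc 1 N, Integrable (W n) P) :
    ∀ n ∈ Finset.Icc 1 N, Integrable (value P F N X Y W n) P := by
  intro n hn
  obtain ⟨hn1, hnN⟩ := Finset.mem_Icc.1 hn
  clear hn
  induction hnN using Nat.decreasingInduction with
  | self => rw [value_self]; exact hW N (Finset.mem_Icc.2 ⟨hn1, le_rfl⟩)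
  | of_succ k hk _ =>
    have hk' : k ∈ Finset.Icc 1 N := Finset.mem_Icc.2 ⟨hn1, hk.le⟩
    rw [value_of_lt hk]
    exact (hY k hk').inf ((hX k hk').sup integrable_condExp)

lemma isStoppingTime_maxStop (hX : ∀ n, 1 ≤ n → n < N → Measurable[F n] (X n)) :
    IsStoppingTime F (fun ω => (maxStop P F N X Y W ω : WithTop ℕ)) :=
  isStoppingTime_hittingBtwn_of_measurable measurableSet_Iic fun n h₁ h₂ =>
    stronglyMeasurable_condExp.measurable.sub (hX n h₁ h₂)

lemma isStoppingTime_minStop (hY : ∀ n, 1 ≤ n → n < N → Measurable[F n] (Y n)) :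
    IsStoppingTime F (fun ω => (minStop P F N X Y W ω : WithTop ℕ)) :=
  isStoppingTime_hittingBtwn_of_measurable measurableSet_Iic fun n h₁ h₂ =>
    (hY n h₁ h₂).sub stronglyMeasurable_condExp.measurable

lemma maxStop_mem (hN : 1 ≤ N) (ω : Ω) : maxStop P F N X Y W ω ∈ Finset.Icc 1 N := by
  simpa [maxStop] using hittingBtwn_mem_Icc hN ω

lemma minStop_mem (hN : 1 ≤ N) (ω : Ω) : minStop P F N X Y W ω ∈ Finset.Icc 1 N := by
  simpa [minStop] using hittingBtwn_mem_Icc hN ω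

lemma continuation_le_of_maxStop_lt {ω : Ω} (h : maxStop P F N X Y W ω < N) :
    continuation P F N X Y W (maxStop P F N X Y W ω) ω ≤ X (maxStop P F N X Y W ω) ω := by
  simpa [maxStop] using hittingBtwn_mem_set_of_hittingBtwn_lt h

lemma le_continuation_of_minStop_lt {ω : Ω} (h : minStop P F N X Y W ω < N) :
    Y (minStop P F N X Y W ω) ω ≤ continuation P F N X Y W (minStop P F N X Y W ω) ω := by
  simpa [minStop] using hittingBtwn_mem_set_of_hittingBtwn_lt h

lemma lt_continuation_of_lt_maxStop {ω : Ω} {n : ℕ} (hn : 1 ≤ n)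
    (h : n < maxStop P F N X Y W ω) : X n ω < continuation P F N X Y W n ω := by
  simpa using notMem_of_lt_hittingBtwn h hn

lemma continuation_lt_of_lt_minStop {ω : Ω} {n : ℕ} (hn : 1 ≤ n)
    (h : n < minStop P F N X Y W ω) : continuation P F N X Y W n ω < Y n ω := by
  simpa using notMem_of_lt_hittingBtwn h hn

lemma integrable_reward {s : Finset ℕ} (hX : ∀ n ∈ s, Integrable (X n) P)
    (hY : ∀ n ∈ s, Integrable (Y n) P) (hW : ∀ n ∈ s, Integrable (W n) P) {lam mu : Ω → ℕ}
    (hlam : Measurable lam) (hmu : Measurable mu) (hlams : ∀ ω, lam ω ∈ s) (hmus : ∀ ω, mu ω ∈ s) :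
    Integrable (fun ω => reward X Y W (lam ω) (mu ω) ω) P := by
  refine integrable_comp_index_of_mem hlam hlams fun i hi =>
    integrable_comp_index_of_mem (f := fun j ω => reward X Y W i j ω) hmu hmus fun j hj => ?_
  unfold reward
  split_ifs
  exacts [hX i hi, hW i hi, hY j hj]

lemma reward_le_value_min {i j : ℕ} {ω : Ω} (hiN : i ≤ N) (hjN : j ≤ N)
    (hXW : X i ω ≤ W i ω) (hWY : W i ω ≤ Y i ω)
    (hj : j < N → Y j ω ≤ continuation P F N X Y W j ω) :
    reward X Y W i j ω ≤ value P F N X Y W (min i j) ω := by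
  rcases lt_trichotomy i j with hij | rfl | hji
  · rw [reward, if_pos hij, min_eq_left hij.le, value_of_lt (hij.trans_le hjN)]
    exact le_min (hXW.trans hWY) (le_max_left _ _)
  · rw [reward, if_neg (lt_irrefl i), if_pos rfl, min_self]
    rcases hiN.lt_or_eq with hiN | rfl
    · rw [value_of_lt hiN]
      exact le_min hWY ((hWY.trans (hj hiN)).trans (le_max_right _ _))
    · rw [value_self]
  · rw [reward, if_neg hji.not_gt, if_neg hji.ne', min_eq_right hji.le,
      value_of_lt (hji.trans_le hiN)]
    exact le_min le_rfl ((hj (hji.trans_le hiN)).trans (le_max_right _ _))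

lemma value_min_le_reward {i j : ℕ} {ω : Ω} (hiN : i ≤ N) (hjN : j ≤ N)
    (hXW : X i ω ≤ W i ω) (hi : i < N → continuation P F N X Y W i ω ≤ X i ω) :
    value P F N X Y W (min i j) ω ≤ reward X Y W i j ω := by
  rcases lt_trichotomy i j with hij | rfl | hji
  · rw [reward, if_pos hij, min_eq_left hij.le, value_of_lt (hij.trans_le hjN)]
    exact min_le_of_right_le (max_le le_rfl (hi (hij.trans_le hjN)))
  · rw [reward, if_neg (lt_irrefl i), if_pos rfl, min_self]
    rcases hiN.lt_or_eq with hiN | rfl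
    · rw [value_of_lt hiN]
      exact min_le_of_right_le ((max_le le_rfl (hi hiN)).trans hXW)
    · rw [value_self]
  · rw [reward, if_neg hji.not_gt, if_neg hji.ne', min_eq_right hji.le,
      value_of_lt (hji.trans_le hiN)]
    exact min_le_left _ _

variable [IsFiniteMeasure P]

theorem payoff_le_integral_value (hN : 1 ≤ N)
    (hYm : ∀ n, 1 ≤ n → n < N → Measurable[F n] (Y n))
    (hX : ∀ n ∈ Finset.Icc 1 N, Integrable (X n) P) (hY : ∀ n ∈ Finset.Icc 1 N, Integrable (Y n) P)
    (hW : ∀ n ∈ Finset.Icc 1 N, Integrable (W n) P)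
    (horder : ∀ᵐ ω ∂P, ∀ n ∈ Finset.Icc 1 N, X n ω ≤ W n ω ∧ W n ω ≤ Y n ω)
    {lam : Ω → ℕ} (hlam : IsStoppingTime F (fun ω => (lam ω : WithTop ℕ)))
    (hlamN : ∀ ω, lam ω ∈ Finset.Icc 1 N) :
    neveuPayoff P X Y W lam (minStop P F N X Y W) ≤ ∫ ω, value P F N X Y W 1 ω ∂P := by
  set mu := minStop P F N X Y W
  have hmu : IsStoppingTime F (fun ω => (mu ω : WithTop ℕ)) := isStoppingTime_minStop hYm
  have hmuN : ∀ ω, mu ω ∈ Finset.Icc 1 N := minStop_mem hN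
  have hτ := isStoppingTime_min_coe hlam hmu
  have hτN : ∀ ω, min (lam ω) (mu ω) ∈ Finset.Icc 1 N := fun ω =>
    Finset.mem_Icc.2 ⟨le_min (Finset.mem_Icc.1 (hlamN ω)).1 (Finset.mem_Icc.1 (hmuN ω)).1,
      (min_le_right _ _).trans (Finset.mem_Icc.1 (hmuN ω)).2⟩
  have hV := integrable_value (F := F) hX hY hW
  calc neveuPayoff P X Y W lam mu = ∫ ω, reward X Y W (lam ω) (mu ω) ω ∂P := rfl
    _ ≤ ∫ ω, value P F N X Y W (min (lam ω) (mu ω)) ω ∂P := by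
      refine integral_mono_ae (integrable_reward hX hY hW (measurable_of_isStoppingTime_coe hlam)
        (measurable_of_isStoppingTime_coe hmu) hlamN hmuN)
        (integrable_comp_index_of_mem (measurable_of_isStoppingTime_coe hτ) hτN hV) ?_
      filter_upwards [horder] with ω hω
      obtain ⟨hXW, hWY⟩ := hω _ (hlamN ω)
      exact reward_le_value_min (Finset.mem_Icc.1 (hlamN ω)).2 (Finset.mem_Icc.1 (hmuN ω)).2
        hXW hWY le_continuation_of_minStop_lt
    _ ≤ ∫ ω, value P F N X Y W 1 ω ∂P := by
      refine integral_stopped_le_of_condExp_le hN hV hτ hτN fun ω n hn hnτ => ?_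
      have hnmu : n < mu ω := hnτ.trans_le (min_le_right _ _)
      rw [value_of_lt (hnmu.trans_le (Finset.mem_Icc.1 (hmuN ω)).2)]
      exact le_min (continuation_lt_of_lt_minStop hn hnmu).le (le_max_right _ _)

theorem integral_value_le_payoff (hN : 1 ≤ N)
    (hXm : ∀ n, 1 ≤ n → n < N → Measurable[F n] (X n))
    (hX : ∀ n ∈ Finset.Icc 1 N, Integrable (X n) P) (hY : ∀ n ∈ Finset.Icc 1 N, Integrable (Y n) P)
    (hW : ∀ n ∈ Finset.Icc 1 N, Integrable (W n) P)
    (horder : ∀ᵐ ω ∂P, ∀ n ∈ Finset.Icc 1 N, X n ω ≤ W n ω)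
    {mu : Ω → ℕ} (hmu : IsStoppingTime F (fun ω => (mu ω : WithTop ℕ)))
    (hmuN : ∀ ω, mu ω ∈ Finset.Icc 1 N) :
    ∫ ω, value P F N X Y W 1 ω ∂P ≤ neveuPayoff P X Y W (maxStop P F N X Y W) mu := by
  set lam := maxStop P F N X Y W
  have hlam : IsStoppingTime F (fun ω => (lam ω : WithTop ℕ)) := isStoppingTime_maxStop hXm
  have hlamN : ∀ ω, lam ω ∈ Finset.Icc 1 N := maxStop_mem hN
  have hτ := isStoppingTime_min_coe hlam hmu
  have hτN : ∀ ω, min (lam ω) (mu ω) ∈ Finset.Icc 1 N := fun ω =>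
    Finset.mem_Icc.2 ⟨le_min (Finset.mem_Icc.1 (hlamN ω)).1 (Finset.mem_Icc.1 (hmuN ω)).1,
      (min_le_left _ _).trans (Finset.mem_Icc.1 (hlamN ω)).2⟩
  have hV := integrable_value (F := F) hX hY hW
  calc ∫ ω, value P F N X Y W 1 ω ∂P
      ≤ ∫ ω, value P F N X Y W (min (lam ω) (mu ω)) ω ∂P := by
        refine integral_le_stopped_of_le_condExp hN hV hτ hτN fun ω n hn hnτ => ?_
        have hnlam : n < lam ω := hnτ.trans_le (min_le_left _ _)
        rw [value_of_lt (hnlam.trans_le (Finset.mem_Icc.1 (hlamN ω)).2)]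
        exact min_le_of_right_le (max_le (lt_continuation_of_lt_maxStop hn hnlam).le le_rfl)
    _ ≤ ∫ ω, reward X Y W (lam ω) (mu ω) ω ∂P := by
      refine integral_mono_ae (integrable_comp_index_of_mem (measurable_of_isStoppingTime_coe hτ) hτN hV)
        (integrable_reward hX hY hW (measurable_of_isStoppingTime_coe hlam)
          (measurable_of_isStoppingTime_coe hmu) hlamN hmuN) ?_
      filter_upwards [horder] with ω hω
      exact value_min_le_reward (Finset.mem_Icc.1 (hlamN ω)).2 (Finset.mem_Icc.1 (hmuN ω)).2
        (hω _ (hlamN ω)) continuation_le_of_maxStop_lt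
    _ = neveuPayoff P X Y W lam mu := rfl

end NeveuGame

open NeveuGame

/-- (Finite-horizon Neveu game.) For integrable adapted processes
`X, Y, W` with `X_n ≤ W_n ≤ Y_n` a.s., there is a saddle point `(λ*, μ*)` in pure
stopping times with values in `{1,…,N}`:
`R(λ,μ*) ≤ R(λ*,μ*) ≤ R(λ*,μ)` for all such stopping times `λ, μ`. -/
theorem neveu_game_saddle {Ω : Type*} {m : MeasurableSpace Ω}
    (P : Measure Ω) [IsProbabilityMeasure P] (F : Filtration ℕ m)
    (N : ℕ) (hN : 1 ≤ N) (X Y W : ℕ → Ω → ℝ)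
    (hadapt : ∀ n, 1 ≤ n → n ≤ N →
      Measurable[F n] (X n) ∧ Measurable[F n] (Y n) ∧ Measurable[F n] (W n))
    (hint : ∀ n, 1 ≤ n → n ≤ N →
      Integrable (X n) P ∧ Integrable (Y n) P ∧ Integrable (W n) P)
    (horder : ∀ n, 1 ≤ n → n ≤ N → ∀ᵐ ω ∂P, X n ω ≤ W n ω ∧ W n ω ≤ Y n ω) :
    ∃ lams mus : Ω → ℕ,
      IsStoppingTime F (fun ω => (lams ω : WithTop ℕ)) ∧ (∀ ω, lams ω ∈ Finset.Icc 1 N) ∧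
      IsStoppingTime F (fun ω => (mus ω : WithTop ℕ)) ∧ (∀ ω, mus ω ∈ Finset.Icc 1 N) ∧
      ∀ lam mu : Ω → ℕ,
        IsStoppingTime F (fun ω => (lam ω : WithTop ℕ)) → (∀ ω, lam ω ∈ Finset.Icc 1 N) →
        IsStoppingTime F (fun ω => (mu ω : WithTop ℕ)) → (∀ ω, mu ω ∈ Finset.Icc 1 N) →
          neveuPayoff P X Y W lam mus ≤ neveuPayoff P X Y W lams mus ∧
            neveuPayoff P X Y W lams mus ≤ neveuPayoff P X Y W lams mu := by
  have hXm n (h₁ : 1 ≤ n) (h₂ : n < N) : Measurable[F n] (X n) := (hadapt n h₁ h₂.le).1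
  have hYm n (h₁ : 1 ≤ n) (h₂ : n < N) : Measurable[F n] (Y n) := (hadapt n h₁ h₂.le).2.1
  have hint' n (hn : n ∈ Finset.Icc 1 N) := hint n (Finset.mem_Icc.1 hn).1 (Finset.mem_Icc.1 hn).2
  have hXi n hn : Integrable (X n) P := (hint' n hn).1
  have hYi n hn : Integrable (Y n) P := (hint' n hn).2.1
  have hWi n hn : Integrable (W n) P := (hint' n hn).2.2
  have horder' : ∀ᵐ ω ∂P, ∀ n ∈ Finset.Icc 1 N, X n ω ≤ W n ω ∧ W n ω ≤ Y n ω :=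
    (Filter.eventually_all_finset _).2 fun n hn =>
      horder n (Finset.mem_Icc.1 hn).1 (Finset.mem_Icc.1 hn).2
  have upper lam := payoff_le_integral_value (F := F) (lam := lam) hN hYm hXi hYi hWi horder'
  have lower mu := integral_value_le_payoff (F := F) (mu := mu) hN hXm hXi hYi hWi
    (horder'.mono fun ω h n hn => (h n hn).1)
  refine ⟨maxStop P F N X Y W, minStop P F N X Y W, isStoppingTime_maxStop hXm, maxStop_mem hN,
    isStoppingTime_minStop hYm, minStop_mem hN, fun lam mu hlam hlamN hmu hmuN => ⟨?_, ?_⟩⟩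
  · exact (upper lam hlam hlamN).trans (lower _ (isStoppingTime_minStop hYm) (minStop_mem hN))
  · exact (upper _ (isStoppingTime_maxStop hXm) (maxStop_mem hN)).trans (lower mu hmu hmuN)
end
end
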